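/- arXiv:math/0612147 — 2 statements merged into one kernel-verified Lean document; each statement's English description precedes it below -/
import Mathlib

section
/- For every integer r ≥ 1 the coefficient λ_r satisfies ‖λ_r‖ < p^{−(p−1)r/p²}; moreover, for every r ≥ 0 the coefficient λ_r lies in the ℤ_p-subalgebra of L generated by π. -/
open PowerSeries Finset
set_option linter.unusedSectionVars false
set_option linter.unusedVariables false
noncomputable section
namespace DworkAux
variable {K : Type*} [Field K] [CharZero K]

def expOf (f : K⟦X⟧) : K⟦X⟧ :=
  PowerSeries.mk fun n => ∑ k ∈ range (n + 1), (coeff (R := K) n (f ^ k)) / (k.factorial : K)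

lemma coeff_expOf (f : K⟦X⟧) (n : ℕ) :
    coeff (R := K) n (expOf f) = ∑ k ∈ range (n + 1), (coeff (R := K) n (f ^ k)) / (k.factorial : K) :=
  coeff_mk _ _

lemma coeff_pow_eq_zero {f : K⟦X⟧} (hf : constantCoeff (R := K) f = 0) {n k : ℕ} (h : n < k) :
    coeff (R := K) n (f ^ k) = 0 := by
  have hd : (X : K⟦X⟧) ^ k ∣ f ^ k := pow_dvd_pow_of_dvd (X_dvd_iff.mpr hf) k
  exact (X_pow_dvd_iff.mp hd) n h

lemma coeff_mul_pow_eq_zero {f g : K⟦X⟧} (hf : constantCoeff (R := K) f = 0)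
    (hg : constantCoeff (R := K) g = 0) {n k l : ℕ} (h : n < k + l) :
    coeff (R := K) n (f ^ k * g ^ l) = 0 := by
  have hd : (X : K⟦X⟧) ^ (k + l) ∣ f ^ k * g ^ l := by
    rw [pow_add]
    exact mul_dvd_mul (pow_dvd_pow_of_dvd (X_dvd_iff.mpr hf) k)
      (pow_dvd_pow_of_dvd (X_dvd_iff.mpr hg) l)
  exact (X_pow_dvd_iff.mp hd) n h

lemma coeff_expOf_ext {f : K⟦X⟧} (hf : constantCoeff (R := K) f = 0) {n N : ℕ} (h : n ≤ N) :
    coeff (R := K) n (expOf f) = ∑ k ∈ range (N + 1), (coeff (R := K) n (f ^ k)) / (k.factorial : K) := by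
  rw [coeff_expOf]
  refine Finset.sum_subset (Finset.range_subset_range.mpr (by omega)) ?_
  intro k _ hk
  rw [Finset.mem_range] at hk
  rw [coeff_pow_eq_zero hf (by omega), zero_div]

lemma constantCoeff_expOf (f : K⟦X⟧) :
    constantCoeff (R := K) (expOf f) = 1 := by
  rw [← coeff_zero_eq_constantCoeff_apply, coeff_expOf, Finset.sum_range_one]
  simp

lemma expOf_add {f g : K⟦X⟧} (hf : constantCoeff (R := K) f = 0) (hg : constantCoeff (R := K) g = 0) :
    expOf (f + g) = expOf f * expOf g := by
  ext n
  set E : ℕ → ℕ → K := fun k l => coeff (R := K) n (f ^ k * g ^ l) / ((k.factorial : K) * l.factorial)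
    with hE
  have hfac : ∀ m : ℕ, (m.factorial : K) ≠ 0 := fun m =>
    Nat.cast_ne_zero.mpr m.factorial_ne_zero
  have lhs_eq : coeff (R := K) n (expOf (f + g))
      = ∑ m ∈ range (n + 1), ∑ k ∈ range (m + 1), E k (m - k) := by
    rw [coeff_expOf]
    refine Finset.sum_congr rfl fun m _ => ?_
    rw [add_pow, map_sum, Finset.sum_div]
    refine Finset.sum_congr rfl fun k hk => ?_
    rw [Finset.mem_range] at hk
    have hknat : (m.choose k : K) * ((k.factorial : K) * ((m - k).factorial : K))
        = (m.factorial : K) := by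
      rw [← Nat.cast_mul, ← Nat.cast_mul, ← mul_assoc,
        Nat.choose_mul_factorial_mul_factorial (by omega : k ≤ m)]
    rw [show ((m.choose k : ℕ) : K⟦X⟧) = C (R := K) ((m.choose k : ℕ) : K) from
      (map_natCast (C (R := K)) (m.choose k)).symm, coeff_mul_C, hE]
    rw [div_eq_div_iff (hfac m) (mul_ne_zero (hfac k) (hfac (m - k)))]
    linear_combination coeff (R := K) n (f ^ k * g ^ (m - k)) * hknat
  have mid_eq : ∑ m ∈ range (n + 1), ∑ k ∈ range (m + 1), E k (m - k)
      = ∑ q ∈ (range (n + 1) ×ˢ range (n + 1)).filter (fun q => q.1 + q.2 ≤ n),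
          E q.1 q.2 := by
    refine Eq.trans (Finset.sum_sigma (range (n + 1)) (fun m => range (m + 1))
      (fun x => E x.2 (x.1 - x.2))).symm ?_
    refine Finset.sum_nbij' (fun x => (x.2, x.1 - x.2)) (fun q => ⟨q.1 + q.2, q.1⟩)
      ?_ ?_ ?_ ?_ ?_
    · rintro ⟨m, k⟩ hmk
      simp only [Finset.mem_sigma, Finset.mem_range] at hmk
      simp only [Finset.mem_filter, Finset.mem_product, Finset.mem_range]
      omega
    · rintro ⟨a, b⟩ hab
      simp only [Finset.mem_filter, Finset.mem_product, Finset.mem_range] at hab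
      simp only [Finset.mem_sigma, Finset.mem_range]
      omega
    · rintro ⟨m, k⟩ hmk
      simp only [Finset.mem_sigma, Finset.mem_range] at hmk
      simp only [Sigma.mk.inj_iff]
      constructor
      · omega
      · exact heq_of_eq rfl
    · rintro ⟨a, b⟩ hab
      simp only [Finset.mem_filter, Finset.mem_product, Finset.mem_range] at hab
      simp only [Prod.ext_iff]
      exact ⟨trivial, by omega⟩
    · rintro ⟨m, k⟩ hmk
      rfl
  have fill_eq : ∑ q ∈ (range (n + 1) ×ˢ range (n + 1)).filter (fun q => q.1 + q.2 ≤ n),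
        E q.1 q.2
      = ∑ q ∈ range (n + 1) ×ˢ range (n + 1), E q.1 q.2 := by
    refine Finset.sum_subset (Finset.filter_subset _ _) ?_
    intro q hq hq'
    simp only [Finset.mem_filter, hq, true_and, not_le] at hq'
    rw [hE]
    simp only
    rw [coeff_mul_pow_eq_zero hf hg hq', zero_div]
  have rhs_eq : coeff (R := K) n (expOf f * expOf g)
      = ∑ q ∈ range (n + 1) ×ˢ range (n + 1), E q.1 q.2 := by
    rw [coeff_mul]
    have hR : ∀ q ∈ antidiagonal n,
        coeff (R := K) q.1 (expOf f) * coeff (R := K) q.2 (expOf g)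
          = ∑ k ∈ range (n + 1), ∑ l ∈ range (n + 1),
              coeff (R := K) q.1 (f ^ k) * coeff (R := K) q.2 (g ^ l)
                / ((k.factorial : K) * l.factorial) := by
      intro q hq
      rw [Finset.HasAntidiagonal.mem_antidiagonal] at hq
      rw [coeff_expOf_ext hf (show q.1 ≤ n by omega),
        coeff_expOf_ext hg (show q.2 ≤ n by omega), Finset.sum_mul_sum]
      exact Finset.sum_congr rfl fun k _ => Finset.sum_congr rfl fun l _ => div_mul_div_comm _ _ _ _
    rw [Finset.sum_congr rfl hR, Finset.sum_comm, Finset.sum_product]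
    refine Finset.sum_congr rfl fun k _ => ?_
    rw [Finset.sum_comm]
    refine Finset.sum_congr rfl fun l _ => ?_
    rw [← Finset.sum_div, ← coeff_mul, hE]
  rw [lhs_eq, mid_eq, fill_eq, rhs_eq]

lemma expOf_zero : expOf (0 : K⟦X⟧) = 1 := by
  ext n
  rw [coeff_expOf]
  rcases Nat.eq_zero_or_pos n with h | h
  · subst h; simp
  · rw [PowerSeries.coeff_one, if_neg (by omega), Finset.sum_eq_zero]
    intro k hk
    rcases Nat.eq_zero_or_pos k with hk0 | hk0
    · subst hk0
      rw [pow_zero, PowerSeries.coeff_one, if_neg (by omega), zero_div]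
    · rw [zero_pow (by omega), map_zero, zero_div]
lemma expOf_nsmul {f : K⟦X⟧} (hf : constantCoeff (R := K) f = 0) (m : ℕ) :
    expOf ((m : ℕ) • f) = expOf f ^ m := by
  induction m with
  | zero => simpa using expOf_zero
  | succ m ih =>
    have hmf : constantCoeff (R := K) ((m : ℕ) • f) = 0 := by rw [map_nsmul, hf, smul_zero]
    rw [succ_nsmul, expOf_add hmf hf, ih, pow_succ]

lemma map_expOf {K' : Type*} [Field K'] [CharZero K'] (φ : K →+* K') (f : K⟦X⟧) :
    PowerSeries.map φ (expOf f) = expOf (PowerSeries.map φ f) := by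
  ext n
  rw [coeff_map, coeff_expOf, coeff_expOf, map_sum]
  refine Finset.sum_congr rfl fun k _ => ?_
  rw [map_div₀, map_natCast, ← map_pow, coeff_map]

lemma rescale_expOf (a : K) (f : K⟦X⟧) :
    rescale a (expOf f) = expOf (rescale a f) := by
  ext n
  rw [coeff_rescale, coeff_expOf, coeff_expOf, Finset.mul_sum]
  refine Finset.sum_congr rfl fun k _ => ?_
  rw [← map_pow, coeff_rescale, mul_div_assoc]

/-- dilation by `X ↦ X^m` -/
def dil (m : ℕ) (f : K⟦X⟧) : K⟦X⟧ :=
  PowerSeries.mk fun n => if m ∣ n then coeff (R := K) (n / m) f else 0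

lemma coeff_dil (m : ℕ) (f : K⟦X⟧) (n : ℕ) :
    coeff (R := K) n (dil m f) = if m ∣ n then coeff (R := K) (n / m) f else 0 :=
  coeff_mk _ _

lemma coeff_dil_mul (m : ℕ) (f : K⟦X⟧) (d : ℕ) (hm : m ≠ 0) :
    coeff (R := K) (m * d) (dil m f) = coeff (R := K) d f := by
  rw [coeff_dil, if_pos ⟨d, rfl⟩, Nat.mul_div_cancel_left _ (Nat.pos_of_ne_zero hm)]

lemma constantCoeff_dil (m : ℕ) (f : K⟦X⟧) :
    constantCoeff (R := K) (dil m f) = constantCoeff (R := K) f := by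
  rw [← coeff_zero_eq_constantCoeff_apply, coeff_dil, if_pos (dvd_zero m), Nat.zero_div,
    coeff_zero_eq_constantCoeff_apply]

lemma dil_add (m : ℕ) (f g : K⟦X⟧) : dil m (f + g) = dil m f + dil m g := by
  ext n
  rw [map_add, coeff_dil, coeff_dil, coeff_dil]
  split_ifs with h
  · rw [map_add]
  · rw [add_zero]

lemma dil_zero (m : ℕ) : dil m (0 : K⟦X⟧) = 0 := by
  ext n
  rw [coeff_dil]
  split_ifs <;> simp

lemma dil_sum {ι : Type*} (m : ℕ) (s : Finset ι) (F : ι → K⟦X⟧) :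
    dil m (∑ i ∈ s, F i) = ∑ i ∈ s, dil m (F i) := by
  classical
  induction s using Finset.induction_on with
  | empty => rw [Finset.sum_empty, Finset.sum_empty, dil_zero]
  | @insert a s ha ih => rw [Finset.sum_insert ha, Finset.sum_insert ha, dil_add, ih]

lemma dil_one (m : ℕ) (hm : m ≠ 0) : dil m (1 : K⟦X⟧) = 1 := by
  ext n
  rw [coeff_dil]
  by_cases h : m ∣ n
  · obtain ⟨c, rfl⟩ := h
    rw [if_pos ⟨c, rfl⟩, Nat.mul_div_cancel_left _ (Nat.pos_of_ne_zero hm),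
      PowerSeries.coeff_one, PowerSeries.coeff_one]
    by_cases hc : c = 0
    · subst hc; rw [if_pos rfl, if_pos (by simp)]
    · rw [if_neg hc, if_neg (by simp [Nat.mul_eq_zero, hm, hc])]
  · rw [if_neg h, PowerSeries.coeff_one, if_neg (by rintro rfl; exact h (dvd_zero m))]

lemma dil_mul (m : ℕ) (hm : m ≠ 0) (f g : K⟦X⟧) :
    dil m (f * g) = dil m f * dil m g := by
  ext n
  rw [coeff_mul n (dil m f) (dil m g), coeff_dil]
  by_cases h : m ∣ n
  · obtain ⟨d, rfl⟩ := h
    rw [if_pos ⟨d, rfl⟩, Nat.mul_div_cancel_left _ (Nat.pos_of_ne_zero hm), coeff_mul d f g]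
    rw [show ∑ q ∈ antidiagonal (m * d), coeff (R := K) q.1 (dil m f) * coeff (R := K) q.2 (dil m g)
        = ∑ q ∈ (antidiagonal (m * d)).filter (fun q => m ∣ q.1 ∧ m ∣ q.2),
            coeff (R := K) q.1 (dil m f) * coeff (R := K) q.2 (dil m g) from
      (Finset.sum_subset (Finset.filter_subset _ _) ?_).symm]
    · refine Finset.sum_nbij' (fun q => (m * q.1, m * q.2)) (fun q => (q.1 / m, q.2 / m))
        ?_ ?_ ?_ ?_ ?_
      · rintro ⟨a, b⟩ hab
        rw [Finset.HasAntidiagonal.mem_antidiagonal] at hab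
        simp only [Finset.mem_filter, Finset.HasAntidiagonal.mem_antidiagonal]
        exact ⟨by rw [← Nat.mul_add, hab], ⟨a, rfl⟩, ⟨b, rfl⟩⟩
      · rintro ⟨a, b⟩ hab
        simp only [Finset.mem_filter, Finset.HasAntidiagonal.mem_antidiagonal] at hab
        rw [Finset.HasAntidiagonal.mem_antidiagonal]
        obtain ⟨hsum, ⟨a', rfl⟩, ⟨b', rfl⟩⟩ := hab
        show m * a' / m + m * b' / m = d
        rw [show m * a' / m = a' from Nat.mul_div_cancel_left _ (Nat.pos_of_ne_zero hm),
          show m * b' / m = b' from Nat.mul_div_cancel_left _ (Nat.pos_of_ne_zero hm)]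
        rw [← Nat.mul_add] at hsum
        exact Nat.eq_of_mul_eq_mul_left (Nat.pos_of_ne_zero hm) hsum
      · rintro ⟨a, b⟩ hab
        simp only [Prod.ext_iff]
        exact ⟨Nat.mul_div_cancel_left _ (Nat.pos_of_ne_zero hm),
          Nat.mul_div_cancel_left _ (Nat.pos_of_ne_zero hm)⟩
      · rintro ⟨a, b⟩ hab
        simp only [Finset.mem_filter, Finset.HasAntidiagonal.mem_antidiagonal] at hab
        obtain ⟨hsum, ⟨a', rfl⟩, ⟨b', rfl⟩⟩ := hab
        simp only [Prod.ext_iff]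
        constructor
        · show m * (m * a' / m) = m * a'
          rw [Nat.mul_div_cancel_left _ (Nat.pos_of_ne_zero hm)]
        · show m * (m * b' / m) = m * b'
          rw [Nat.mul_div_cancel_left _ (Nat.pos_of_ne_zero hm)]
      · rintro ⟨a, b⟩ hab
        show coeff (R := K) a f * coeff (R := K) b g = coeff (R := K) (m * a) (dil m f) * coeff (R := K) (m * b) (dil m g)
        rw [coeff_dil_mul m f a hm, coeff_dil_mul m g b hm]
    · rintro ⟨a, b⟩ hab hnab
      simp only [Finset.mem_filter, hab, true_and, not_and_or] at hnab
      rcases hnab with h1 | h1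
      · rw [coeff_dil, if_neg h1, zero_mul]
      · rw [coeff_dil m g, if_neg h1, mul_zero]
  · rw [if_neg h]
    refine (Finset.sum_eq_zero ?_).symm
    rintro ⟨a, b⟩ hab
    rw [Finset.HasAntidiagonal.mem_antidiagonal] at hab
    by_cases h1 : m ∣ a
    · have h2 : ¬ m ∣ b := fun h2 => h (hab ▸ Nat.dvd_add h1 h2)
      rw [coeff_dil m g, if_neg h2, mul_zero]
    · rw [coeff_dil, if_neg h1, zero_mul]

lemma dil_pow (m : ℕ) (hm : m ≠ 0) (f : K⟦X⟧) (k : ℕ) :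
    dil m (f ^ k) = (dil m f) ^ k := by
  induction k with
  | zero => rw [pow_zero, pow_zero, dil_one m hm]
  | succ k ih => rw [pow_succ, pow_succ, dil_mul m hm, ih]

lemma dil_expOf (m : ℕ) (hm : m ≠ 0) {f : K⟦X⟧} (hf : constantCoeff (R := K) f = 0) :
    dil m (expOf f) = expOf (dil m f) := by
  ext n
  rw [coeff_dil]
  by_cases h : m ∣ n
  · obtain ⟨d, rfl⟩ := h
    rw [if_pos ⟨d, rfl⟩, Nat.mul_div_cancel_left _ (Nat.pos_of_ne_zero hm)]
    rw [coeff_expOf_ext hf (show d ≤ m * d from Nat.le_mul_of_pos_left d (Nat.pos_of_ne_zero hm)),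
      coeff_expOf (dil m f) (m * d)]
    refine Finset.sum_congr rfl fun k _ => ?_
    rw [← dil_pow m hm, coeff_dil_mul m _ d hm]
  · rw [if_neg h]
    rw [coeff_expOf]
    refine (Finset.sum_eq_zero ?_).symm
    intro k _
    rw [← dil_pow m hm, coeff_dil, if_neg h, zero_div]

lemma coeff_C_mul_X_pow (c : K) (t n : ℕ) (k : ℕ) :
    coeff (R := K) n ((C (R := K) c * X ^ t) ^ k) = if n = t * k then c ^ k else 0 := by
  rw [mul_pow, ← map_pow, ← pow_mul, coeff_C_mul, coeff_X_pow]
  rw [mul_comm t k]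
  split_ifs with h
  · rw [mul_one]
  · rw [mul_zero]

lemma coeff_C_mul_X_pow' (c : K) (t n : ℕ) :
    coeff (R := K) n (C (R := K) c * X ^ t) = if n = t then c else 0 := by
  simpa using coeff_C_mul_X_pow c t n 1

lemma dil_C_mul_X_pow (m : ℕ) (hm : m ≠ 0) (c : K) (t : ℕ) :
    dil m (C (R := K) c * X ^ t) = C (R := K) c * X ^ (m * t) := by
  ext n
  rw [coeff_dil, coeff_C_mul_X_pow' c (m * t) n]
  by_cases h : m ∣ n
  · obtain ⟨d, rfl⟩ := h
    rw [if_pos ⟨d, rfl⟩, Nat.mul_div_cancel_left _ (Nat.pos_of_ne_zero hm),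
      coeff_C_mul_X_pow' c t d]
    by_cases h2 : d = t
    · subst h2; rw [if_pos rfl, if_pos rfl]
    · rw [if_neg h2, if_neg (fun hc => h2 (Nat.eq_of_mul_eq_mul_left (Nat.pos_of_ne_zero hm) hc))]
  · rw [if_neg h, if_neg (by rintro rfl; exact h ⟨t, rfl⟩)]

lemma coeff_expOf_C_mul_X (c : K) (k : ℕ) :
    coeff (R := K) k (expOf (C (R := K) c * X)) = c ^ k / (k.factorial : K) := by
  rw [coeff_expOf]
  rw [Finset.sum_eq_single k]
  · rw [← pow_one (X : K⟦X⟧), coeff_C_mul_X_pow, if_pos (by omega)]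
  · intro b _ hb
    rw [← pow_one (X : K⟦X⟧), coeff_C_mul_X_pow, if_neg (by omega), zero_div]
  · intro h
    exact absurd (Finset.self_mem_range_succ k) h
section Padic

variable (p : ℕ) [Fact p.Prime]

lemma p_pos : 0 < p := (Fact.out : p.Prime).pos
lemma p_one_lt : 1 < p := (Fact.out : p.Prime).one_lt
lemma p_ne_zero : (p : ℚ_[p]) ≠ 0 := Nat.cast_ne_zero.mpr (p_pos p).ne'

/-- p^{-j} in ℚ_p -/
def cinv (j : ℕ) : ℚ_[p] := ((p : ℚ_[p])⁻¹) ^ j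

/-- truncated Artin–Hasse exponent ∑_{j ≤ N} p^{-j} X^{p^j} -/
def Sser (N : ℕ) : ℚ_[p]⟦X⟧ := ∑ j ∈ range (N + 1), C (R := ℚ_[p]) (cinv p j) * X ^ (p ^ j)

def Aser (N : ℕ) : ℚ_[p]⟦X⟧ := expOf (Sser p N)

def eCoef (n : ℕ) : ℚ_[p] := coeff (R := ℚ_[p]) n (Aser p n)

lemma constantCoeff_C_mul_X_pow {K : Type*} [Field K] [CharZero K] (c : K) {t : ℕ} (ht : t ≠ 0) :
    constantCoeff (R := K) (C (R := K) c * X ^ t) = 0 := by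
  rw [← coeff_zero_eq_constantCoeff_apply, coeff_C_mul_X_pow' c t 0, if_neg (by omega)]

lemma constantCoeff_Sser (N : ℕ) : constantCoeff (R := ℚ_[p]) (Sser p N) = 0 := by
  rw [Sser, map_sum]
  exact Finset.sum_eq_zero fun j _ =>
    constantCoeff_C_mul_X_pow _ (pow_ne_zero j (p_pos p).ne')

lemma coeff_expOf_C_mul_X_pow_small {K : Type*} [Field K] [CharZero K] (c : K) {m b : ℕ}
    (hb : 0 < b) (hbm : b < m) : coeff (R := K) b (expOf (C (R := K) c * X ^ m)) = 0 := by
  rw [coeff_expOf]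
  refine Finset.sum_eq_zero fun k _ => ?_
  rcases Nat.eq_zero_or_pos k with rfl | hk
  · rw [pow_zero, PowerSeries.coeff_one, if_neg (by omega), zero_div]
  · rw [coeff_C_mul_X_pow, if_neg (by nlinarith), zero_div]

lemma coeff_Aser {n N : ℕ} (h : n ≤ N) : coeff (R := ℚ_[p]) n (Aser p N) = eCoef p n := by
  induction N, h using Nat.le_induction with
  | base => rfl
  | succ N hN ih =>
    have hsplit : Sser p (N + 1)
        = Sser p N + C (R := ℚ_[p]) (cinv p (N + 1)) * X ^ (p ^ (N + 1)) := by
      rw [Sser, Finset.sum_range_succ]; rfl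
    have hm : (0:ℕ) < p ^ (N + 1) := Nat.pow_pos (p_pos p)
    rw [Aser, hsplit, expOf_add (constantCoeff_Sser p N)
      (constantCoeff_C_mul_X_pow _ (by omega)), coeff_mul]
    rw [Finset.sum_eq_single_of_mem (n, 0) (by simp)]
    · show coeff (R := ℚ_[p]) n _ * coeff (R := ℚ_[p]) 0 _ = _
      rw [coeff_zero_eq_constantCoeff_apply, constantCoeff_expOf, mul_one]
      exact ih
    · rintro ⟨a, b⟩ hab hne
      rw [Finset.HasAntidiagonal.mem_antidiagonal] at hab
      have hb : 0 < b := by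
        rcases Nat.eq_zero_or_pos b with rfl | h'
        · have : a = n := by omega
          subst this
          exact absurd rfl hne
        · exact h'
      have hblt : b < p ^ (N + 1) := by
        have h1 : n < p ^ (N + 1) :=
          lt_of_le_of_lt hN (lt_of_lt_of_le (Nat.lt_pow_self (n := N) (p_one_lt p))
            (Nat.pow_le_pow_right (p_pos p) (by omega)))
        omega
      show coeff (R := ℚ_[p]) a _ * coeff (R := ℚ_[p]) b _ = 0
      rw [coeff_expOf_C_mul_X_pow_small _ hb hblt, mul_zero]

lemma dwork_identity (N : ℕ) :
    dil p (Aser p N) * expOf (C (R := ℚ_[p]) (p : ℚ_[p]) * X) = Aser p (N + 1) ^ p := by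
  have hps : (p : ℕ) ≠ 0 := (p_pos p).ne'
  have h1 : dil p (Aser p N) = expOf (dil p (Sser p N)) :=
    dil_expOf p hps (constantCoeff_Sser p N)
  have h2 : dil p (Sser p N) = ∑ j ∈ range (N + 1), C (R := ℚ_[p]) (cinv p j) * X ^ (p * p ^ j) := by
    rw [Sser, dil_sum]
    exact Finset.sum_congr rfl fun j _ => dil_C_mul_X_pow p hps _ _
  have h3 : (p : ℕ) • Sser p (N + 1)
      = ∑ j ∈ range (N + 2), C (R := ℚ_[p]) ((p : ℚ_[p]) * cinv p j) * X ^ (p ^ j) := by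
    rw [Sser, Finset.smul_sum]
    refine Finset.sum_congr rfl fun j _ => ?_
    rw [nsmul_eq_mul, show ((p : ℕ) : ℚ_[p]⟦X⟧) = C (R := ℚ_[p]) ((p : ℕ) : ℚ_[p]) from
      (map_natCast (C (R := ℚ_[p])) p).symm, ← mul_assoc, ← map_mul]
  have hbase : dil p (Sser p N) + C (R := ℚ_[p]) (p : ℚ_[p]) * X = (p : ℕ) • Sser p (N + 1) := by
    rw [h3, Finset.sum_range_succ', h2]
    congr 1
    · refine Finset.sum_congr rfl fun j _ => ?_
      congr 1
      · congr 1
        rw [cinv, cinv, pow_succ', ← mul_assoc, mul_inv_cancel₀ (p_ne_zero p), one_mul]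
      · rw [pow_succ']
    · rw [cinv, pow_zero, mul_one, pow_zero, pow_one]
  have hc1 : constantCoeff (R := ℚ_[p]) (dil p (Sser p N)) = 0 := by
    rw [constantCoeff_dil, constantCoeff_Sser]
  have hc2 : constantCoeff (R := ℚ_[p]) (C (R := ℚ_[p]) (p : ℚ_[p]) * X) = 0 := by
    rw [map_mul, constantCoeff_X, mul_zero]
  calc dil p (Aser p N) * expOf (C (R := ℚ_[p]) (p : ℚ_[p]) * X)
      = expOf (dil p (Sser p N)) * expOf (C (R := ℚ_[p]) (p : ℚ_[p]) * X) := by rw [h1]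
    _ = expOf (dil p (Sser p N) + C (R := ℚ_[p]) (p : ℚ_[p]) * X) := (expOf_add hc1 hc2).symm
    _ = expOf ((p : ℕ) • Sser p (N + 1)) := by rw [hbase]
    _ = Aser p (N + 1) ^ p := expOf_nsmul (constantCoeff_Sser p (N + 1)) p

end Padic
section Padic2
variable (p : ℕ) [Fact p.Prime]

lemma digits_sum_pos {k : ℕ} (hk : k ≠ 0) : 1 ≤ (Nat.digits p k).sum := by
  have hne : Nat.digits p k ≠ [] := Nat.digits_ne_nil_iff_ne_zero.mpr hk
  have hlast := Nat.getLast_digit_ne_zero p hk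
  calc 1 ≤ (Nat.digits p k).getLast hne := Nat.one_le_iff_ne_zero.mpr hlast
    _ ≤ (Nat.digits p k).sum :=
      List.single_le_sum (fun _ _ => Nat.zero_le _) _ (List.getLast_mem hne)

lemma vfact {k : ℕ} (hk : 1 ≤ k) :
    (p - 1) * padicValNat p k.factorial ≤ k - 1 := by
  have h := sub_one_mul_padicValNat_factorial (p := p) k
  have hs := digits_sum_pos p (by omega : k ≠ 0)
  omega

lemma norm_factorial (k : ℕ) :
    ‖(k.factorial : ℚ_[p])‖ = (p : ℝ) ^ (-(padicValNat p k.factorial : ℤ)) := by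
  have hne : ((k.factorial : ℕ) : ℚ_[p]) ≠ 0 :=
    Nat.cast_ne_zero.mpr k.factorial_ne_zero
  rw [Padic.norm_eq_zpow_neg_valuation hne, Padic.valuation_natCast]

lemma uk_bound {k : ℕ} (hk : 1 ≤ k) :
    ‖coeff (R := ℚ_[p]) k (expOf (C (R := ℚ_[p]) (p : ℚ_[p]) * X))‖ ≤ (p : ℝ)⁻¹ := by
  rw [coeff_expOf_C_mul_X, norm_div, norm_pow, Padic.norm_p, norm_factorial]
  have hv : (padicValNat p k.factorial : ℤ) ≤ (k : ℤ) - 1 := by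
    have h1 := vfact p hk
    have h2 : 1 * padicValNat p k.factorial ≤ (p - 1) * padicValNat p k.factorial :=
      Nat.mul_le_mul_right _ (by have := p_one_lt p; omega)
    omega
  have hp1 : (1:ℝ) < (p:ℝ) := by exact_mod_cast p_one_lt p
  have hppos : (0:ℝ) < (p:ℝ) := by positivity
  rw [div_le_iff₀ (by positivity)]
  have lhs_eq : ((p:ℝ)⁻¹) ^ k = (p:ℝ) ^ (-(k:ℤ)) := by
    rw [zpow_neg, zpow_natCast, inv_pow]
  rw [lhs_eq, show ((p:ℝ)⁻¹) = (p:ℝ) ^ (-1 : ℤ) by norm_num, ← zpow_add₀ hppos.ne']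
  apply zpow_le_zpow_right₀ hp1.le
  omega

lemma pfrob (T : Polynomial ℤ_[p]) (n : ℕ) :
    ‖(T ^ p).coeff n - (if p ∣ n then T.coeff (n / p) else 0)‖ ≤ (p : ℝ)⁻¹ := by
  set d := (T ^ p).coeff n - (if p ∣ n then T.coeff (n / p) else 0) with hd
  have hker : PadicInt.toZMod d = 0 := by
    have h2 : (T.map (PadicInt.toZMod : ℤ_[p] →+* ZMod p)) ^ p
        = Polynomial.expand (ZMod p) p (T.map PadicInt.toZMod) := by
      rw [← Polynomial.map_frobenius_expand p (T.map PadicInt.toZMod), ZMod.frobenius_zmod,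
        Polynomial.map_id]
    have h1 : PadicInt.toZMod ((T ^ p).coeff n)
        = (if p ∣ n then PadicInt.toZMod (T.coeff (n / p)) else 0) := by
      rw [← Polynomial.coeff_map, Polynomial.map_pow, h2,
        Polynomial.coeff_expand (p_pos p)]
      split_ifs with h
      · rw [Polynomial.coeff_map]
      · rfl
    rw [hd, map_sub, h1]
    split_ifs with h
    · exact sub_self _
    · simp
  have hmem : d ∈ RingHom.ker (PadicInt.toZMod (p := p)) := hker
  rw [PadicInt.ker_toZMod, PadicInt.maximalIdeal_eq_span_p, Ideal.mem_span_singleton] at hmem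
  obtain ⟨c, hc⟩ := hmem
  rw [hc, norm_mul, PadicInt.norm_p]
  exact mul_le_of_le_one_right (by positivity) (PadicInt.norm_le_one c)

lemma eCoef_zero : eCoef p 0 = 1 := by
  rw [eCoef, coeff_zero_eq_constantCoeff_apply, Aser, constantCoeff_expOf]

lemma coeff_mul_top {n : ℕ} {h E : ℚ_[p]⟦X⟧} (hE : (X : ℚ_[p]⟦X⟧) ^ n ∣ E) :
    coeff (R := ℚ_[p]) n (h * E) = constantCoeff (R := ℚ_[p]) h * coeff (R := ℚ_[p]) n E := by
  rw [coeff_mul, Finset.sum_eq_single_of_mem (0, n) (by simp)]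
  · show coeff (R := ℚ_[p]) 0 h * coeff (R := ℚ_[p]) n E = _
    rw [coeff_zero_eq_constantCoeff_apply]
  · rintro ⟨a, b⟩ hab hne
    rw [Finset.HasAntidiagonal.mem_antidiagonal] at hab
    have hb : b < n := by
      rcases Nat.lt_or_ge b n with h' | h'
      · exact h'
      · exfalso
        have : b = n := by omega
        subst this
        have : a = 0 := by omega
        subst this
        exact hne rfl
    rw [X_pow_dvd_iff.mp hE b hb, mul_zero]

lemma eCoef_norm_le_one (n : ℕ) : ‖eCoef p n‖ ≤ 1 := by
  induction n using Nat.strong_induction_on with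
  | _ n IH =>
  rcases Nat.eq_zero_or_pos n with rfl | hn
  · rw [eCoef_zero]
    norm_num
  have hp2 : 1 < p := p_one_lt p
  have hppos : (0:ℝ) < (p:ℝ)⁻¹ := by
    have : (0:ℝ) < (p:ℝ) := by exact_mod_cast (p_pos p)
    positivity
  -- the integral polynomial of the previous coefficients
  set a : ℕ → ℤ_[p] := fun i => if h : i < n then ⟨eCoef p i, IH i h⟩ else 0 with ha
  set T : Polynomial ℤ_[p] := ∑ i ∈ range n, Polynomial.monomial i (a i) with hT
  have hTc : ∀ i, (T.coeff i : ℚ_[p]) = if i < n then eCoef p i else 0 := by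
    intro i
    rw [hT, Polynomial.finset_sum_coeff]
    rw [show ∑ j ∈ range n, (Polynomial.monomial j (a j)).coeff i
        = ∑ j ∈ range n, if j = i then a j else 0 from
      Finset.sum_congr rfl fun j _ => Polynomial.coeff_monomial]
    rw [Finset.sum_ite_eq' (range n) i a]
    by_cases h : i < n
    · rw [if_pos (Finset.mem_range.mpr h), if_pos h, ha]
      exact congrArg (fun z : ℤ_[p] => (z : ℚ_[p])) (dif_pos h : a i = (⟨eCoef p i, IH i h⟩ : ℤ_[p]))
    · rw [if_neg (fun hc => h (Finset.mem_range.mp hc)), if_neg h]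
      simp
  set t : ℚ_[p]⟦X⟧ := PowerSeries.map (PadicInt.Coe.ringHom (p := p))
    ((T : PowerSeries ℤ_[p])) with hts
  have ht : ∀ i, coeff (R := ℚ_[p]) i t = if i < n then eCoef p i else 0 := by
    intro i
    rw [hts, coeff_map, Polynomial.coeff_coe]
    exact hTc i
  have htp : ∀ i, coeff (R := ℚ_[p]) i (t ^ p) = (((T ^ p).coeff i : ℤ_[p]) : ℚ_[p]) := by
    intro i
    rw [hts, ← map_pow, ← Polynomial.coe_pow, coeff_map, Polynomial.coeff_coe]
    rfl
  have htpnorm : ∀ i, ‖coeff (R := ℚ_[p]) i (t ^ p)‖ ≤ 1 := by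
    intro i
    rw [htp, ← PadicInt.norm_def]
    exact PadicInt.norm_le_one _
  set g : ℚ_[p]⟦X⟧ := Aser p (n + 1) with hgs
  have hgc : ∀ i, i ≤ n → coeff (R := ℚ_[p]) i g = eCoef p i := fun i hi =>
    coeff_Aser p (show i ≤ n + 1 by omega)
  set E : ℚ_[p]⟦X⟧ := g - t with hEs
  have hElow : ∀ i, i < n → coeff (R := ℚ_[p]) i E = 0 := by
    intro i hi
    rw [hEs, map_sub, hgc i (by omega), ht, if_pos hi, sub_self]
  have hEdvd : (X : ℚ_[p]⟦X⟧) ^ n ∣ E := X_pow_dvd_iff.mpr hElow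
  have hEn : coeff (R := ℚ_[p]) n E = eCoef p n := by
    rw [hEs, map_sub, hgc n le_rfl, ht, if_neg (lt_irrefl n), sub_zero]
  have hconst_t : constantCoeff (R := ℚ_[p]) t = 1 := by
    rw [← coeff_zero_eq_constantCoeff_apply, ht, if_pos hn, eCoef_zero]
  -- expansion of g^p
  have hg_pow : ∀ m : ℕ, 2 ≤ m →
      coeff (R := ℚ_[p]) n (g ^ m) = coeff (R := ℚ_[p]) n (t ^ m) + (m : ℚ_[p]) * eCoef p n := by
    intro m hm
    obtain ⟨q, rfl⟩ : ∃ q, m = q + 2 := ⟨m - 2, by omega⟩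
    have hge : g = t + E := by rw [hEs]; ring
    rw [hge, add_pow, map_sum]
    rw [show q + 2 + 1 = (q + 1) + 1 + 1 by omega, Finset.sum_range_succ, Finset.sum_range_succ]
    have hzero : ∀ k ∈ range (q + 1),
        coeff (R := ℚ_[p]) n (t ^ k * E ^ (q + 2 - k) * ((q + 2).choose k : ℚ_[p]⟦X⟧)) = 0 := by
      intro k hk
      rw [Finset.mem_range] at hk
      have h2 : 2 ≤ q + 2 - k := by omega
      have hdvd : (X : ℚ_[p]⟦X⟧) ^ (n + 1)
          ∣ t ^ k * E ^ (q + 2 - k) * (((q + 2).choose k : ℕ) : ℚ_[p]⟦X⟧) := by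
        refine Dvd.dvd.mul_right (Dvd.dvd.mul_left ?_ _) _
        calc (X : ℚ_[p]⟦X⟧) ^ (n + 1) ∣ X ^ (2 * n) := pow_dvd_pow _ (by omega)
          _ ∣ E ^ 2 := by rw [show 2 * n = n + n from two_mul n, pow_add, sq]; exact mul_dvd_mul hEdvd hEdvd
          _ ∣ E ^ (q + 2 - k) := pow_dvd_pow _ h2
      exact X_pow_dvd_iff.mp hdvd n (by omega)
    rw [Finset.sum_eq_zero hzero, zero_add]
    -- k = q+1 term and k = q+2 term
    have hterm1 : coeff (R := ℚ_[p]) n (t ^ (q + 1) * E ^ (q + 2 - (q + 1))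
        * (((q + 2).choose (q + 1) : ℕ) : ℚ_[p]⟦X⟧)) = ((q + 2 : ℕ) : ℚ_[p]) * eCoef p n := by
      rw [show q + 2 - (q + 1) = 1 by omega, pow_one, Nat.choose_succ_self_right]
      rw [show (((q + 2) : ℕ) : ℚ_[p]⟦X⟧) = C (R := ℚ_[p]) (((q + 2) : ℕ) : ℚ_[p]) from
        (map_natCast (C (R := ℚ_[p])) (q + 2)).symm, coeff_mul_C, coeff_mul_top p hEdvd,
        map_pow, hconst_t, one_pow, hEn, one_mul, mul_comm]
    have hterm2 : coeff (R := ℚ_[p]) n (t ^ (q + 2) * E ^ (q + 2 - (q + 2))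
        * (((q + 2).choose (q + 2) : ℕ) : ℚ_[p]⟦X⟧)) = coeff (R := ℚ_[p]) n (t ^ (q + 2)) := by
      rw [Nat.sub_self, pow_zero, mul_one, Nat.choose_self, Nat.cast_one, mul_one]
    rw [hterm1, hterm2, add_comm]
  -- key identity at coefficient n
  have hkey := congrArg (coeff (R := ℚ_[p]) n) (dwork_identity p n)
  rw [coeff_mul] at hkey
  set u : ℕ → ℚ_[p] := fun k => coeff (R := ℚ_[p]) k (expOf (C (R := ℚ_[p]) (p : ℚ_[p]) * X)) with hu
  have hu0 : u 0 = 1 := by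
    simp only [hu]
    rw [coeff_zero_eq_constantCoeff_apply, constantCoeff_expOf]
  set D : ℕ → ℚ_[p] := fun b => coeff (R := ℚ_[p]) b (dil p (Aser p n)) with hDdef
  have hD : ∀ b, b ≤ n → D b = if p ∣ b then eCoef p (b / p) else 0 := by
    intro b hb
    simp only [hDdef]
    rw [coeff_dil]
    split_ifs with h1
    · rw [coeff_Aser p (show b / p ≤ n from le_trans (Nat.div_le_self b p) hb)]
    · rfl
  have hdivlt : ∀ b, b ≤ n → b / p < n := by
    intro b hb
    rcases lt_or_eq_of_le hb with h | h
    · exact lt_of_le_of_lt (Nat.div_le_self b p) h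
    · subst h
      exact Nat.div_lt_self (by omega) hp2
  have hDnorm : ∀ b, b ≤ n → ‖D b‖ ≤ 1 := by
    intro b hb
    rw [hD b hb]
    split_ifs with h1
    · exact IH _ (hdivlt b hb)
    · norm_num
  have hkey2 : ∑ q ∈ antidiagonal n, D q.1 * u q.2 = coeff (R := ℚ_[p]) n (g ^ p) := hkey
  have hsum : D n * u 0 + ∑ q ∈ (antidiagonal n).erase (n, 0), D q.1 * u q.2
      = coeff (R := ℚ_[p]) n (g ^ p) :=
    (Finset.add_sum_erase (antidiagonal n) (fun q => D q.1 * u q.2)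
      (show ((n, 0) : ℕ × ℕ) ∈ antidiagonal n by simp)).trans hkey2
  have hmain : (p : ℚ_[p]) * eCoef p n
      = (D n - coeff (R := ℚ_[p]) n (t ^ p)) + ∑ q ∈ (antidiagonal n).erase (n, 0), D q.1 * u q.2 := by
    rw [hu0, mul_one] at hsum
    rw [hg_pow p (by omega)] at hsum
    linear_combination -hsum
  -- norm estimates
  have hfrob : ‖D n - coeff (R := ℚ_[p]) n (t ^ p)‖ ≤ (p:ℝ)⁻¹ := by
    have heq : D n - coeff (R := ℚ_[p]) n (t ^ p)
        = -((((T ^ p).coeff n - (if p ∣ n then T.coeff (n / p) else 0) : ℤ_[p]) : ℚ_[p])) := by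
      rw [hD n le_rfl, htp]
      push_cast
      have : ((if p ∣ n then T.coeff (n / p) else 0 : ℤ_[p]) : ℚ_[p])
          = if p ∣ n then eCoef p (n / p) else 0 := by
        split_ifs with h1
        · rw [hTc, if_pos (hdivlt n le_rfl)]
        · norm_num
      rw [this]
      ring
    rw [heq, norm_neg, ← PadicInt.norm_def]
    exact pfrob p T n
  have hR : ‖∑ q ∈ (antidiagonal n).erase (n, 0), D q.1 * u q.2‖ ≤ (p:ℝ)⁻¹ := by
    refine IsUltrametricDist.norm_sum_le_of_forall_le_of_nonneg hppos.le ?_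
    rintro ⟨b, k⟩ hq
    rw [Finset.mem_erase, Finset.HasAntidiagonal.mem_antidiagonal] at hq
    have hk : 1 ≤ k := by
      rcases Nat.eq_zero_or_pos k with rfl | h'
      · exfalso
        exact hq.1 (by rw [show b = n by omega])
      · exact h'
    rw [norm_mul]
    calc ‖D b‖ * ‖u k‖ ≤ 1 * (p:ℝ)⁻¹ :=
          mul_le_mul (hDnorm b (by omega)) (uk_bound p hk) (norm_nonneg _) zero_le_one
      _ = (p:ℝ)⁻¹ := one_mul _
  have hnorm_sum : ‖(p : ℚ_[p]) * eCoef p n‖ ≤ (p:ℝ)⁻¹ := by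
    rw [hmain]
    exact le_trans (IsUltrametricDist.norm_add_le_max _ _) (max_le hfrob hR)
  rw [norm_mul, Padic.norm_p] at hnorm_sum
  calc ‖eCoef p n‖ = ((p:ℝ)⁻¹)⁻¹ * ((p:ℝ)⁻¹ * ‖eCoef p n‖) := by
        field_simp
    _ ≤ ((p:ℝ)⁻¹)⁻¹ * (p:ℝ)⁻¹ := by
        refine mul_le_mul_of_nonneg_left hnorm_sum (by positivity)
    _ = 1 := by field_simp

/-! ## analytic estimates -/

lemma hPgt1 : 1 < (p:ℝ) := by exact_mod_cast p_one_lt p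

lemma hPpos : 0 < (p:ℝ) := lt_trans one_pos (hPgt1 p)

lemma hPm1pos : 0 < (p:ℝ) - 1 := by have := hPgt1 p; linarith

noncomputable def βex : ℝ := (2 * (p:ℝ) - 1) / (((p:ℝ)) ^ 2 * ((p:ℝ) - 1))

lemma βex_nonneg : 0 ≤ βex p := by
  have h1 := hPgt1 p
  apply div_nonneg <;> nlinarith

noncomputable def βr : ℝ := ((p:ℝ)) ^ (βex p)

noncomputable def Mr : ℝ := ((p:ℝ)) ^ (-((p:ℝ) - 1)⁻¹)

lemma βr_pos : 0 < βr p := Real.rpow_pos_of_pos (hPpos p) _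

lemma βr_ge_one : 1 ≤ βr p := by
  calc (1:ℝ) = (p:ℝ) ^ (0:ℝ) := (Real.rpow_zero _).symm
    _ ≤ (p:ℝ) ^ (βex p) := (Real.rpow_le_rpow_left_iff (hPgt1 p)).mpr (βex_nonneg p)

lemma Mr_pos : 0 < Mr p := Real.rpow_pos_of_pos (hPpos p) _

/-- weighted coefficient bound -/
def WBd (β M : ℝ) (f : ℚ_[p]⟦X⟧) : Prop := ∀ i : ℕ, ‖coeff (R := ℚ_[p]) i f‖ ≤ M * β ^ i

lemma WBd.mul {β M1 M2 : ℝ} {f g : ℚ_[p]⟦X⟧} (hβ : 0 ≤ β) (hM1 : 0 ≤ M1) (hM2 : 0 ≤ M2)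
    (h1 : WBd p β M1 f) (h2 : WBd p β M2 g) : WBd p β (M1 * M2) (f * g) := by
  intro i
  rw [coeff_mul]
  refine IsUltrametricDist.norm_sum_le_of_forall_le_of_nonneg (by positivity) ?_
  rintro ⟨a, b⟩ hq
  rw [Finset.HasAntidiagonal.mem_antidiagonal] at hq
  rw [norm_mul]
  calc ‖coeff (R := ℚ_[p]) a f‖ * ‖coeff (R := ℚ_[p]) b g‖ ≤ (M1 * β ^ a) * (M2 * β ^ b) :=
        mul_le_mul (h1 a) (h2 b) (norm_nonneg _) (by positivity)
    _ = (M1 * M2) * β ^ (a + b) := by rw [pow_add]; ring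
    _ = (M1 * M2) * β ^ i := by rw [hq]

lemma WBd.one {β : ℝ} (hβ : 0 ≤ β) : WBd p β 1 (1 : ℚ_[p]⟦X⟧) := by
  intro i
  rw [PowerSeries.coeff_one]
  split_ifs with h
  · subst h; simp
  · rw [norm_zero]; positivity

lemma WBd.pow {β M : ℝ} {f : ℚ_[p]⟦X⟧} (hβ : 0 ≤ β) (hM : 0 ≤ M)
    (h : WBd p β M f) (k : ℕ) : WBd p β (M ^ k) (f ^ k) := by
  induction k with
  | zero => simpa using WBd.one p hβ
  | succ k ih =>
    rw [pow_succ, pow_succ]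
    exact WBd.mul p hβ (by positivity) hM ih h

lemma natkey (q : ℕ) (hq : 1 ≤ q) : ∀ j : ℕ, 2 ≤ j →
    (j * q + 1) * (q + 1) ^ 2 ≤ (2 * q + 1) * (q + 1) ^ j := by
  intro j hj
  induction j, hj using Nat.le_induction with
  | base => nlinarith
  | succ j hj ih =>
    have h1 : ((j + 1) * q + 1) ≤ (q + 1) * (j * q + 1) := by
      calc (j + 1) * q + 1 = j * q + q + 1 := by ring
        _ ≤ j * q * q + (j * q + q + 1) := Nat.le_add_left _ _
        _ = (q + 1) * (j * q + 1) := by ring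
    calc ((j + 1) * q + 1) * (q + 1) ^ 2 ≤ ((q + 1) * (j * q + 1)) * (q + 1) ^ 2 :=
          Nat.mul_le_mul_right _ h1
      _ = (q + 1) * ((j * q + 1) * (q + 1) ^ 2) := by ring
      _ ≤ (q + 1) * ((2 * q + 1) * (q + 1) ^ j) := Nat.mul_le_mul_left _ ih
      _ = (2 * q + 1) * (q + 1) ^ (j + 1) := by ring

lemma natkey_real (j : ℕ) (hj : 2 ≤ j) :
    ((j : ℝ) * ((p:ℝ) - 1) + 1) * ((p:ℝ)) ^ 2 ≤ (2 * (p:ℝ) - 1) * ((p:ℝ)) ^ j := by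
  obtain ⟨q, hpq⟩ : ∃ q, p = q + 1 := ⟨p - 1, by have := p_one_lt p; omega⟩
  have hq1 : 1 ≤ q := by have := p_one_lt p; omega
  have h := natkey q hq1 j hj
  have hR : (((j : ℝ)) * (q:ℝ) + 1) * ((q:ℝ) + 1) ^ 2
      ≤ (2 * (q:ℝ) + 1) * ((q:ℝ) + 1) ^ j := by exact_mod_cast h
  have hP : (p:ℝ) = (q:ℝ) + 1 := by rw [hpq]; push_cast; ring
  rw [hP]
  calc ((j:ℝ) * ((q:ℝ) + 1 - 1) + 1) * ((q:ℝ) + 1) ^ 2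
      = (((j : ℝ)) * (q:ℝ) + 1) * ((q:ℝ) + 1) ^ 2 := by ring
    _ ≤ (2 * (q:ℝ) + 1) * ((q:ℝ) + 1) ^ j := hR
    _ = (2 * ((q:ℝ) + 1) - 1) * ((q:ℝ) + 1) ^ j := by ring

lemma keyR (j : ℕ) (hj : 2 ≤ j) :
    ((p:ℝ)) ^ j ≤ Mr p * (βr p) ^ (p ^ j : ℕ) := by
  have hP0 := hPpos p
  have hP1 := hPgt1 p
  have hPm1 := hPm1pos p
  have hrw : Mr p * (βr p) ^ (p ^ j : ℕ)
      = ((p:ℝ)) ^ (-((p:ℝ) - 1)⁻¹ + βex p * ((p:ℝ) ^ j)) := by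
    rw [Mr, βr, ← Real.rpow_natCast (((p:ℝ)) ^ (βex p)) (p ^ j),
      ← Real.rpow_mul hP0.le, ← Real.rpow_add hP0]
    congr 2
    push_cast
    ring
  rw [hrw]
  nth_rewrite 1 [← Real.rpow_natCast ((p:ℝ)) j]
  rw [Real.rpow_le_rpow_left_iff hP1]
  have hkey := natkey_real p j hj
  have hid : -((p:ℝ) - 1)⁻¹ + βex p * ((p:ℝ) ^ j) - (j : ℝ)
      = ((2 * (p:ℝ) - 1) * ((p:ℝ)) ^ j - ((j : ℝ) * ((p:ℝ) - 1) + 1) * ((p:ℝ)) ^ 2)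
        / (((p:ℝ)) ^ 2 * ((p:ℝ) - 1)) := by
    rw [βex]
    field_simp
    ring
  have hnum : 0 ≤ (2 * (p:ℝ) - 1) * ((p:ℝ)) ^ j
      - ((j : ℝ) * ((p:ℝ) - 1) + 1) * ((p:ℝ)) ^ 2 := by linarith
  have hdiv := div_nonneg hnum (by positivity : (0:ℝ) ≤ ((p:ℝ)) ^ 2 * ((p:ℝ) - 1))
  linarith [hid, hdiv]
def Tser (r : ℕ) : ℚ_[p]⟦X⟧ := ∑ j ∈ Finset.Ico 2 (r + 1), C (R := ℚ_[p]) (cinv p j) * X ^ (p ^ j)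

lemma constantCoeff_Tser (r : ℕ) : constantCoeff (R := ℚ_[p]) (Tser p r) = 0 := by
  rw [Tser, map_sum]
  exact Finset.sum_eq_zero fun j _ =>
    constantCoeff_C_mul_X_pow _ (pow_ne_zero j (p_pos p).ne')

lemma norm_cinv (j : ℕ) : ‖cinv p j‖ = (p:ℝ) ^ j := by
  rw [cinv, norm_pow, norm_inv, Padic.norm_p, inv_inv]

lemma MB_nonneg (i : ℕ) : 0 ≤ Mr p * (βr p) ^ i :=
  mul_nonneg (Mr_pos p).le (pow_nonneg (βr_pos p).le i)

lemma wbd_Tser (r : ℕ) : WBd p (βr p) (Mr p) (Tser p r) := by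
  intro i
  rw [Tser, map_sum]
  refine IsUltrametricDist.norm_sum_le_of_forall_le_of_nonneg (MB_nonneg p i) ?_
  intro j hj
  rw [Finset.mem_Ico] at hj
  rw [coeff_C_mul_X_pow']
  split_ifs with h
  · subst h
    rw [norm_cinv]
    exact keyR p j hj.1
  · rw [norm_zero]
    exact MB_nonneg p i

lemma wbd_neg {β M : ℝ} {f : ℚ_[p]⟦X⟧} (h : WBd p β M f) : WBd p β M (-f) := by
  intro i
  rw [map_neg, norm_neg]
  exact h i

lemma G_bound (r b : ℕ) (hb : 1 ≤ b) :
    ‖coeff (R := ℚ_[p]) b (expOf (-(Tser p r)))‖ ≤ Mr p * (βr p) ^ b := by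
  have hP0 := hPpos p
  have hP1 := hPgt1 p
  have hPm1 := hPm1pos p
  rw [coeff_expOf]
  refine IsUltrametricDist.norm_sum_le_of_forall_le_of_nonneg (MB_nonneg p b) ?_
  intro k hk
  rcases Nat.eq_zero_or_pos k with rfl | hk1
  · rw [pow_zero, PowerSeries.coeff_one, if_neg (by omega), zero_div, norm_zero]
    exact MB_nonneg p b
  have hT := WBd.pow p (βr_pos p).le (Mr_pos p).le (wbd_neg p (wbd_Tser p r)) k
  have h1 : ‖coeff (R := ℚ_[p]) b ((-(Tser p r)) ^ k)‖ ≤ (Mr p) ^ k * (βr p) ^ b := hT b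
  have hvk : (padicValNat p k.factorial : ℝ) ≤ ((k:ℝ) - 1) * ((p:ℝ) - 1)⁻¹ := by
    have hv := vfact p hk1
    have hc : ((p:ℝ) - 1) * (padicValNat p k.factorial : ℝ) ≤ (k:ℝ) - 1 := by
      have h1' : (((p - 1) * padicValNat p k.factorial : ℕ) : ℝ) ≤ (((k - 1 : ℕ)) : ℝ) := by
        exact_mod_cast hv
      push_cast [Nat.cast_sub (show 1 ≤ p by have := p_one_lt p; omega),
        Nat.cast_sub hk1] at h1'
      linarith
    rw [← le_div_iff₀' hPm1] at hc
    rw [div_eq_mul_inv] at hc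
    linarith [hc]
  have hfac : ‖(k.factorial : ℚ_[p])‖⁻¹ = (p:ℝ) ^ ((padicValNat p k.factorial : ℕ) : ℝ) := by
    rw [norm_factorial, ← zpow_neg, neg_neg, ← Real.rpow_intCast]
    norm_num
  have hcore : (Mr p) ^ k * (p:ℝ) ^ ((padicValNat p k.factorial : ℕ) : ℝ) ≤ Mr p := by
    rw [Mr, ← Real.rpow_natCast ((p:ℝ) ^ (-((p:ℝ) - 1)⁻¹)) k, ← Real.rpow_mul hP0.le,
      ← Real.rpow_add hP0]
    rw [Real.rpow_le_rpow_left_iff hP1]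
    have hident : -((p:ℝ) - 1)⁻¹ * (k:ℝ) + ((k:ℝ) - 1) * ((p:ℝ) - 1)⁻¹ = -((p:ℝ) - 1)⁻¹ := by
      ring
    linarith [hvk, hident]
  calc ‖coeff (R := ℚ_[p]) b ((-(Tser p r)) ^ k) / (k.factorial : ℚ_[p])‖
      = ‖coeff (R := ℚ_[p]) b ((-(Tser p r)) ^ k)‖ * ‖(k.factorial : ℚ_[p])‖⁻¹ := by
        rw [norm_div, div_eq_mul_inv]
    _ ≤ ((Mr p) ^ k * (βr p) ^ b) * ((p:ℝ) ^ ((padicValNat p k.factorial : ℕ) : ℝ)) := by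
        rw [hfac]
        exact mul_le_mul_of_nonneg_right h1 (Real.rpow_nonneg hP0.le _)
    _ = (βr p) ^ b * ((Mr p) ^ k * (p:ℝ) ^ ((padicValNat p k.factorial : ℕ) : ℝ)) := by ring
    _ ≤ (βr p) ^ b * Mr p := by
        exact mul_le_mul_of_nonneg_left hcore (pow_nonneg (βr_pos p).le b)
    _ = Mr p * (βr p) ^ b := mul_comm _ _

def Fbase : ℚ_[p]⟦X⟧ := X + C (R := ℚ_[p]) ((p:ℚ_[p])⁻¹) * X ^ p

def Fser : ℚ_[p]⟦X⟧ := expOf (Fbase p)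

def cF (r : ℕ) : ℚ_[p] := coeff (R := ℚ_[p]) r (Fser p)

lemma constantCoeff_Fbase : constantCoeff (R := ℚ_[p]) (Fbase p) = 0 := by
  rw [Fbase, map_add, constantCoeff_X,
    constantCoeff_C_mul_X_pow _ (p_pos p).ne', add_zero]

lemma Fsplit (r : ℕ) (hr : 1 ≤ r) : Fbase p + Tser p r = Sser p r := by
  rw [Sser, Finset.range_eq_Ico, Finset.sum_eq_sum_Ico_succ_bot (by omega : 0 < r + 1),
    Finset.sum_eq_sum_Ico_succ_bot (by omega : 0 + 1 < r + 1)]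
  have h0 : C (R := ℚ_[p]) (cinv p 0) * X ^ (p ^ 0) = (X : ℚ_[p]⟦X⟧) := by
    rw [cinv, pow_zero, pow_zero, map_one, one_mul, pow_one]
  have h1 : C (R := ℚ_[p]) (cinv p 1) * X ^ (p ^ 1) = C (R := ℚ_[p]) ((p:ℚ_[p])⁻¹) * X ^ p := by
    rw [cinv, pow_one, pow_one]
  rw [h0, h1, Fbase, Tser, ← add_assoc]

lemma Fser_eq (r : ℕ) (hr : 1 ≤ r) :
    Fser p = Aser p r * expOf (-(Tser p r)) := by
  have hT0 := constantCoeff_Tser p r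
  have hnT0 : constantCoeff (R := ℚ_[p]) (-(Tser p r)) = 0 := by rw [map_neg, hT0, neg_zero]
  have h2 : Aser p r = Fser p * expOf (Tser p r) := by
    rw [Aser, ← Fsplit p r hr, expOf_add (constantCoeff_Fbase p) hT0, Fser]
  rw [h2, mul_assoc, ← expOf_add hT0 hnT0, add_neg_cancel, expOf_zero, mul_one]

lemma cF_bound (r : ℕ) (hr : 1 ≤ r) : ‖cF p r‖ ≤ max 1 (Mr p * (βr p) ^ r) := by
  rw [cF, Fser_eq p r hr, coeff_mul]
  refine IsUltrametricDist.norm_sum_le_of_forall_le_of_nonneg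
    (le_max_of_le_left zero_le_one) ?_
  rintro ⟨a, b⟩ hq
  rw [Finset.HasAntidiagonal.mem_antidiagonal] at hq
  rw [norm_mul]
  have hA : ‖coeff (R := ℚ_[p]) a (Aser p r)‖ ≤ 1 := by
    rw [coeff_Aser p (by omega : a ≤ r)]
    exact eCoef_norm_le_one p a
  rcases Nat.eq_zero_or_pos b with rfl | hb
  · rw [coeff_zero_eq_constantCoeff_apply, constantCoeff_expOf, norm_one, mul_one]
    exact le_max_of_le_left hA
  · have hG := G_bound p r b hb
    refine le_max_of_le_right ?_
    calc ‖coeff (R := ℚ_[p]) a (Aser p r)‖ * ‖coeff (R := ℚ_[p]) b (expOf (-(Tser p r)))‖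
        ≤ 1 * (Mr p * (βr p) ^ b) := mul_le_mul hA hG (norm_nonneg _) zero_le_one
      _ = Mr p * (βr p) ^ b := one_mul _
      _ ≤ Mr p * (βr p) ^ r :=
          mul_le_mul_of_nonneg_left
            (pow_le_pow_right₀ (βr_ge_one p) (by omega)) (Mr_pos p).le

lemma cF_zero : cF p 0 = 1 := by
  rw [cF, Fser, coeff_zero_eq_constantCoeff_apply, constantCoeff_expOf]

lemma MrBr_exp (r : ℕ) : Mr p * (βr p) ^ r
    = (p:ℝ) ^ (-((p:ℝ) - 1)⁻¹ + βex p * (r:ℝ)) := by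
  rw [Mr, βr, ← Real.rpow_natCast ((p:ℝ) ^ (βex p)) r, ← Real.rpow_mul (hPpos p).le,
    ← Real.rpow_add (hPpos p)]

lemma βex_le : βex p ≤ ((p:ℝ) - 1)⁻¹ := by
  have hP1 := hPgt1 p
  have hPm1 := hPm1pos p
  rw [βex, div_le_iff₀ (by positivity)]
  rw [show ((p:ℝ) - 1)⁻¹ * ((p:ℝ) ^ 2 * ((p:ℝ) - 1)) = (p:ℝ) ^ 2 by field_simp]
  nlinarith [sq_nonneg ((p:ℝ) - 1)]

lemma cF_le_all (r : ℕ) : ‖cF p r‖ ≤ (p:ℝ) ^ ((r:ℝ) * ((p:ℝ) - 1)⁻¹) := by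
  have hP0 := hPpos p
  have hP1 := hPgt1 p
  have hPm1 := hPm1pos p
  rcases Nat.eq_zero_or_pos r with rfl | hr
  · rw [cF_zero, norm_one]
    calc (1:ℝ) = (p:ℝ) ^ (0:ℝ) := (Real.rpow_zero _).symm
      _ ≤ _ := by
        rw [Real.rpow_le_rpow_left_iff hP1]
        positivity
  · refine le_trans (cF_bound p r hr) (max_le ?_ ?_)
    · calc (1:ℝ) = (p:ℝ) ^ (0:ℝ) := (Real.rpow_zero _).symm
        _ ≤ _ := by
          rw [Real.rpow_le_rpow_left_iff hP1]
          positivity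
    · rw [MrBr_exp, Real.rpow_le_rpow_left_iff hP1]
      have h1 : βex p * (r:ℝ) ≤ ((p:ℝ) - 1)⁻¹ * (r:ℝ) :=
        mul_le_mul_of_nonneg_right (βex_le p) (Nat.cast_nonneg r)
      have h2 : (0:ℝ) ≤ ((p:ℝ) - 1)⁻¹ := by positivity
      linarith [h1, h2]
/-- strict norm bound on the ℚ_p side combined with `‖π‖^r` -/
lemma final_norm_bound (r : ℕ) (hr : 1 ≤ r) :
    (p:ℝ) ^ (-(((p:ℝ) - 1)⁻¹) * (r:ℝ)) * ‖cF p r‖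
      < (p:ℝ) ^ (-(((p:ℝ) - 1) * (r:ℝ) / (p:ℝ) ^ 2)) := by
  have hP0 := hPpos p
  have hP1 := hPgt1 p
  have hPm1 := hPm1pos p
  have hrpos : (0:ℝ) < (r:ℝ) := by exact_mod_cast hr
  have hA : (0:ℝ) ≤ (p:ℝ) ^ (-(((p:ℝ) - 1)⁻¹) * (r:ℝ)) := (Real.rpow_pos_of_pos hP0 _).le
  calc (p:ℝ) ^ (-(((p:ℝ) - 1)⁻¹) * (r:ℝ)) * ‖cF p r‖
      ≤ (p:ℝ) ^ (-(((p:ℝ) - 1)⁻¹) * (r:ℝ)) * max 1 (Mr p * (βr p) ^ r) :=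
        mul_le_mul_of_nonneg_left (cF_bound p r hr) hA
    _ = max ((p:ℝ) ^ (-(((p:ℝ) - 1)⁻¹) * (r:ℝ)) * 1)
          ((p:ℝ) ^ (-(((p:ℝ) - 1)⁻¹) * (r:ℝ)) * (Mr p * (βr p) ^ r)) :=
        (mul_max_of_nonneg _ _ hA)
    _ < (p:ℝ) ^ (-(((p:ℝ) - 1) * (r:ℝ) / (p:ℝ) ^ 2)) := by
        refine max_lt ?_ ?_
        · rw [mul_one, Real.rpow_lt_rpow_left_iff hP1]
          have h1 : ((p:ℝ) - 1) / (p:ℝ) ^ 2 < ((p:ℝ) - 1)⁻¹ := by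
            rw [div_lt_iff₀ (by positivity : (0:ℝ) < (p:ℝ) ^ 2), ← div_eq_inv_mul,
              lt_div_iff₀ hPm1]
            nlinarith [sq_nonneg ((p:ℝ) - 1)]
          have h2 : ((p:ℝ) - 1) * (r:ℝ) / (p:ℝ) ^ 2 = (((p:ℝ) - 1) / (p:ℝ) ^ 2) * (r:ℝ) := by
            ring
          have h3 : (((p:ℝ) - 1) / (p:ℝ) ^ 2) * (r:ℝ) < ((p:ℝ) - 1)⁻¹ * (r:ℝ) :=
            mul_lt_mul_of_pos_right h1 hrpos
          linarith
        · rw [MrBr_exp, ← Real.rpow_add hP0, Real.rpow_lt_rpow_left_iff hP1]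
          have hEq : -(((p:ℝ) - 1)⁻¹) * (r:ℝ) + βex p * (r:ℝ)
              = -(((p:ℝ) - 1) * (r:ℝ) / (p:ℝ) ^ 2) := by
            rw [βex]
            field_simp
            ring
          have h4 : (0:ℝ) < ((p:ℝ) - 1)⁻¹ := by positivity
          linarith [hEq]

end Padic2

section Bridge

variable (p : ℕ) [Fact p.Prime] {L : Type*} [Field L] [CharZero L]

lemma bridge (φ : ℚ_[p] →+* L) (π : L) (hπ : π ^ (p - 1) = -((p : ℕ) : L)) (r : ℕ) :
    coeff (R := L) r (expOf (C (R := L) π * X - C (R := L) π * X ^ p)) = π ^ r * φ (cF p r) := by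
  have hpL : ((p : ℕ) : L) ≠ 0 := Nat.cast_ne_zero.mpr (p_pos p).ne'
  have h3 : rescale π (PowerSeries.map φ (Fbase p)) = C (R := L) π * X - C (R := L) π * X ^ p := by
    ext n
    rw [coeff_rescale, coeff_map, Fbase, map_add, coeff_X]
    rw [show coeff (R := ℚ_[p]) n (C (R := ℚ_[p]) ((p:ℚ_[p])⁻¹) * X ^ p) = if n = p then (p:ℚ_[p])⁻¹ else 0
      from coeff_C_mul_X_pow' _ _ _]
    rw [map_sub]
    rw [show coeff (R := L) n (C (R := L) π * X) = if n = 1 then π else 0 by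
      rw [← pow_one (X : L⟦X⟧)]; exact coeff_C_mul_X_pow' _ _ _]
    rw [show coeff (R := L) n (C (R := L) π * X ^ p) = if n = p then π else 0 from coeff_C_mul_X_pow' _ _ _]
    have hp2 : 2 ≤ p := p_one_lt p
    by_cases h1 : n = 1
    · subst h1
      rw [if_pos rfl, if_pos rfl, if_neg (by omega), if_neg (by omega)]
      rw [add_zero, map_one, mul_one, pow_one, sub_zero]
    · by_cases h2 : n = p
      · rw [if_neg h1, if_pos h2, if_pos h2, if_neg h1, h2]
        rw [zero_add, zero_sub, map_inv₀, map_natCast]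
        have hpp : π ^ p = -((p : ℕ) : L) * π := by
          conv_lhs => rw [show p = (p - 1) + 1 by omega]
          rw [pow_succ, hπ]
        rw [hpp]
        field_simp
      · rw [if_neg h1, if_neg h2, if_neg h1, if_neg h2]
        rw [add_zero, map_zero, mul_zero, sub_zero]
  calc coeff (R := L) r (expOf (C (R := L) π * X - C (R := L) π * X ^ p))
      = coeff (R := L) r (expOf (rescale π (PowerSeries.map φ (Fbase p)))) := by rw [h3]
    _ = coeff (R := L) r (rescale π (expOf (PowerSeries.map φ (Fbase p)))) := by
        rw [rescale_expOf]
    _ = coeff (R := L) r (rescale π (PowerSeries.map φ (expOf (Fbase p)))) := by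
        rw [map_expOf]
    _ = π ^ r * φ (coeff (R := ℚ_[p]) r (expOf (Fbase p))) := by
        rw [coeff_rescale, coeff_map]
    _ = π ^ r * φ (cF p r) := rfl

end Bridge

end DworkAux

/-- The `r`-th coefficient `λ_r` of Dwork's splitting function
`θ(z) = exp(πz − πz^p) = ∑_k (πz − πz^p)^k / k!`, as a formal power series over `L`.
(The terms with `k > r` contribute nothing to the coefficient of `z^r`, since
`πz − πz^p` has zero constant term.) -/
noncomputable def dworkLambda (p : ℕ) {L : Type*} [Field L] (π : L) (r : ℕ) : L :=
  ∑ k ∈ Finset.range (r + 1),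
    (PowerSeries.coeff (R := L) r
        ((PowerSeries.C (R := L) π * PowerSeries.X - PowerSeries.C (R := L) π * PowerSeries.X ^ p) ^ k))
      / (Nat.factorial k : L)

/-- For every `r ≥ 1`, `‖λ_r‖ < p^{-(p-1)r/p²}`; moreover every `λ_r`
lies in the `ℤ_p`-subalgebra of `L` generated by `π`. -/
theorem statement1 (p : ℕ) [Fact p.Prime] (L : Type*) [NormedField L]
    [NormedAlgebra ℚ_[p] L]
    (hnorm : ∀ x : ℚ_[p], ‖algebraMap ℚ_[p] L x‖ = ‖x‖)
    (π : L) (hπ : π ^ (p - 1) = -(p : L)) :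
    (∀ r : ℕ, 1 ≤ r →
        ‖dworkLambda p π r‖ < (p : ℝ) ^ (-(((p : ℝ) - 1) * (r : ℝ) / (p : ℝ) ^ 2))) ∧
    (∀ r : ℕ, dworkLambda p π r ∈
        Subring.closure ((Set.range fun z : ℤ_[p] => algebraMap ℚ_[p] L (z : ℚ_[p])) ∪ {π})) := by
  haveI : CharZero L := charZero_of_injective_algebraMap (algebraMap ℚ_[p] L).injective
  set φ : ℚ_[p] →+* L := algebraMap ℚ_[p] L with hφ
  have hp2 : 2 ≤ p := (Fact.out : p.Prime).two_le
  have hP0 : (0:ℝ) < (p:ℝ) := DworkAux.hPpos p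
  have hP1 : (1:ℝ) < (p:ℝ) := DworkAux.hPgt1 p
  have hPm1 : (0:ℝ) < (p:ℝ) - 1 := DworkAux.hPm1pos p
  have hdw : ∀ r : ℕ, dworkLambda p π r = π ^ r * φ (DworkAux.cF p r) := by
    intro r
    have heq : dworkLambda p π r = PowerSeries.coeff (R := L) r
        (DworkAux.expOf (PowerSeries.C (R := L) π * PowerSeries.X
          - PowerSeries.C (R := L) π * PowerSeries.X ^ p)) := by
      unfold dworkLambda
      rw [DworkAux.coeff_expOf]
    rw [heq]
    exact DworkAux.bridge p φ π hπ r
  have hnormpL : ‖((p:ℕ) : L)‖ = (p:ℝ)⁻¹ := by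
    rw [show ((p:ℕ):L) = φ ((p:ℕ):ℚ_[p]) from (map_natCast φ p).symm, hφ, hnorm,
      Padic.norm_p]
  have hπpow : ‖π‖ ^ (p - 1) = (p:ℝ)⁻¹ := by rw [← norm_pow, hπ, norm_neg, hnormpL]
  have hm0 : ((p - 1 : ℕ) : ℝ) ≠ 0 := Nat.cast_ne_zero.mpr (by omega)
  have hmP : ((p - 1 : ℕ) : ℝ) = (p:ℝ) - 1 := by
    push_cast [Nat.cast_sub (by omega : 1 ≤ p)]
    ring
  have hπnorm : ‖π‖ = (p:ℝ) ^ (-(((p:ℝ) - 1)⁻¹)) := by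
    have h2 : ‖π‖ ^ (((p - 1 : ℕ)):ℝ) = (p:ℝ)⁻¹ := by
      rw [Real.rpow_natCast]
      exact hπpow
    calc ‖π‖ = (‖π‖ ^ (((p - 1 : ℕ)):ℝ)) ^ ((((p - 1 : ℕ)):ℝ))⁻¹ := by
          rw [← Real.rpow_mul (norm_nonneg π), mul_inv_cancel₀ hm0, Real.rpow_one]
      _ = ((p:ℝ)⁻¹) ^ ((((p - 1 : ℕ)):ℝ))⁻¹ := by rw [h2]
      _ = (p:ℝ) ^ (-(((p:ℝ) - 1)⁻¹)) := by
          rw [show ((p:ℝ))⁻¹ = (p:ℝ) ^ (-1:ℝ) from (Real.rpow_neg_one _).symm,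
            ← Real.rpow_mul hP0.le, neg_one_mul, hmP]
  constructor
  · intro r hr
    rw [hdw r, norm_mul, norm_pow, hπnorm, hφ, hnorm]
    have h1 : ((p:ℝ) ^ (-(((p:ℝ) - 1)⁻¹))) ^ r = (p:ℝ) ^ (-(((p:ℝ) - 1)⁻¹) * (r:ℝ)) := by
      rw [← Real.rpow_natCast ((p:ℝ) ^ (-(((p:ℝ) - 1)⁻¹))) r, ← Real.rpow_mul hP0.le]
    rw [h1]
    exact DworkAux.final_norm_bound p r hr
  · intro r
    have hπmem : π ∈ Subring.closure
        ((Set.range fun z : ℤ_[p] => algebraMap ℚ_[p] L (z : ℚ_[p])) ∪ {π}) :=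
      Subring.subset_closure (Set.mem_union_right _ rfl)
    have hcast : ∀ u : ℚ_[p], ‖u‖ ≤ 1 → φ u ∈ Subring.closure
        ((Set.range fun z : ℤ_[p] => algebraMap ℚ_[p] L (z : ℚ_[p])) ∪ {π}) := fun u hu =>
      Subring.subset_closure (Set.mem_union_left _ ⟨(⟨u, hu⟩ : ℤ_[p]), rfl⟩)
    rw [hdw r]
    by_cases hc0 : DworkAux.cF p r = 0
    · rw [hc0, map_zero, mul_zero]
      exact Subring.zero_mem _
    set v : ℤ := (DworkAux.cF p r).valuation with hv
    have hnormc : ‖DworkAux.cF p r‖ = (p:ℝ) ^ (-v) := Padic.norm_eq_zpow_neg_valuation hc0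
    have hle := DworkAux.cF_le_all p r
    have hvr : ((-v : ℤ) : ℝ) ≤ (r:ℝ) * ((p:ℝ) - 1)⁻¹ := by
      rw [hnormc] at hle
      have h3 : (p:ℝ) ^ ((-v : ℤ):ℝ) ≤ (p:ℝ) ^ ((r:ℝ) * ((p:ℝ) - 1)⁻¹) := by
        rw [Real.rpow_intCast]
        exact hle
      exact (Real.rpow_le_rpow_left_iff hP1).mp h3
    have hIntR : ((-v : ℤ) : ℝ) * ((p:ℝ) - 1) ≤ (r:ℝ) := by
      have h5 : (r:ℝ) * ((p:ℝ) - 1)⁻¹ * ((p:ℝ) - 1) = (r:ℝ) := by field_simp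
      calc ((-v : ℤ) : ℝ) * ((p:ℝ) - 1) ≤ ((r:ℝ) * ((p:ℝ) - 1)⁻¹) * ((p:ℝ) - 1) :=
            mul_le_mul_of_nonneg_right hvr hPm1.le
        _ = (r:ℝ) := h5
    have hInt : (-v) * ((p:ℤ) - 1) ≤ (r:ℤ) := by exact_mod_cast hIntR
    set u : ℚ_[p] := DworkAux.cF p r * ((p:ℕ):ℚ_[p]) ^ (-v) with hu
    have hpQ : ((p:ℕ):ℚ_[p]) ≠ 0 := Nat.cast_ne_zero.mpr (by omega)
    have hunorm : ‖u‖ ≤ 1 := by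
      rw [hu, norm_mul, hnormc, Padic.norm_p_zpow, ← zpow_add₀ (ne_of_gt hP0)]
      norm_num
    rcases le_or_gt 0 v with hv0 | hv0
    · -- v ≥ 0
      set w : ℕ := v.toNat with hwdef
      have hw : (w : ℤ) = v := Int.toNat_of_nonneg hv0
      have hcu : DworkAux.cF p r = u * ((p:ℕ):ℚ_[p]) ^ w := by
        rw [hu, mul_assoc, ← zpow_natCast ((p:ℕ):ℚ_[p]) w, hw, ← zpow_add₀ hpQ]
        norm_num
      rw [hcu, map_mul, map_pow, map_natCast]
      have hpL2 : ((p:ℕ) : L) = -(π ^ (p - 1)) := by rw [hπ]; push_cast; ring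
      rw [hpL2, neg_pow, ← pow_mul]
      have hre : π ^ r * (φ u * ((-1:L) ^ w * π ^ ((p - 1) * w)))
          = ((-1:L) ^ w * φ u) * π ^ (r + (p - 1) * w) := by
        rw [pow_add]
        ring
      rw [hre]
      exact mul_mem (mul_mem (pow_mem (neg_mem (one_mem _)) w) (hcast u hunorm))
        (pow_mem hπmem _)
    · -- v < 0
      set w : ℕ := (-v).toNat with hwdef
      have hw : (w : ℤ) = -v := Int.toNat_of_nonneg (by omega)
      have hle2 : (p - 1) * w ≤ r := by
        have h6 : ((p:ℤ) - 1) * (w:ℤ) ≤ (r:ℤ) := by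
          rw [hw]
          linarith [hInt]
        have h7 : (((p - 1) * w : ℕ) : ℤ) ≤ ((r:ℕ) : ℤ) := by
          push_cast [Nat.cast_sub (by omega : 1 ≤ p)]
          exact_mod_cast h6
        exact_mod_cast h7
      have hcu : u = DworkAux.cF p r * ((p:ℕ):ℚ_[p]) ^ w := by
        rw [hu, ← zpow_natCast ((p:ℕ):ℚ_[p]) w, hw]
      rw [show π ^ r = π ^ (r - (p - 1) * w) * π ^ ((p - 1) * w) from by
        rw [← pow_add]
        congr 1
        omega]
      have hpw : π ^ ((p - 1) * w) = (-1:L) ^ w * ((p:ℕ):L) ^ w := by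
        rw [pow_mul, hπ]
        rw [show -((p:ℕ):L) = (-1:L) * ((p:ℕ):L) by ring, mul_pow]
      rw [hpw]
      have hφu : φ u = φ (DworkAux.cF p r) * ((p:ℕ):L) ^ w := by
        rw [hcu, map_mul, map_pow, map_natCast]
      rw [show π ^ (r - (p - 1) * w) * ((-1:L) ^ w * ((p:ℕ):L) ^ w) * φ (DworkAux.cF p r)
          = ((-1:L) ^ w * φ u) * π ^ (r - (p - 1) * w) from by rw [hφu]; ring]
      exact mul_mem (mul_mem (pow_mem (neg_mem (one_mem _)) w) (hcast u hunorm))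
        (pow_mem hπmem _)
end
end

section
/- The coefficients of θ satisfy λ₀ = 1, λ₁ = π, and ‖λ_r‖ ≤ p^{−2/(p−1)} for every integer r ≥ 2; in other words, θ(z) ≡ 1 + πz modulo terms of π-adic order at least 2/(p−1) in degree ≥ 2. -/
open Finset Nat PowerSeries

lemma factorial_add' (a b : ℕ) : (a + b)! = a ! * ∏ i ∈ range b, (a + i + 1) := by
  induction b with
  | zero => simp
  | succ b ih =>
    rw [prod_range_succ, ← mul_assoc, ← ih, ← add_assoc, factorial_succ, mul_comm]

lemma fact_p_mul (p : ℕ) [hp : Fact p.Prime] (n : ℕ) :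
    ∃ m : ℕ, (p * n)! = p ^ n * n ! * m ∧ (m : ZMod p) = (-1) ^ n := by
  induction n with
  | zero => exact ⟨1, by simp, by simp⟩
  | succ n ih =>
    obtain ⟨m, hm, hmod⟩ := ih
    have hp2 : 2 ≤ p := hp.out.two_le
    refine ⟨m * ∏ i ∈ range (p - 1), (p * n + i + 1), ?_, ?_⟩
    · have h1 : p * (n + 1) = p * n + p := by ring
      rw [h1, factorial_add', hm]
      have h2 : p = (p - 1) + 1 := by omega
      rw [h2, prod_range_succ, ← h2]
      have h3 : p * n + (p - 1) + 1 = p * (n + 1) := by omega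
      rw [h3, factorial_succ]
      ring
    · rw [Nat.cast_mul, Nat.cast_prod, hmod]
      have : ∀ i ∈ range (p - 1), ((p * n + i + 1 : ℕ) : ZMod p) = ((i + 1 : ℕ) : ZMod p) := by
        intro i _
        push_cast
        simp [ZMod.natCast_self]
      calc ((-1:ZMod p)) ^ n * ∏ i ∈ range (p - 1), ((p * n + i + 1 : ℕ) : ZMod p)
          = (-1) ^ n * ∏ i ∈ range (p - 1), ((i + 1 : ℕ) : ZMod p) := by
            rw [prod_congr rfl this]
        _ = (-1) ^ n * ((p-1)! : ZMod p) := by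
            rw [← Nat.cast_prod]
            norm_cast
            rw [prod_range_add_one_eq_factorial]
        _ = (-1) ^ (n + 1) := by rw [ZMod.wilsons_lemma]; ring


lemma sum_digits_zero_iff {p k : ℕ} (hp : 2 ≤ p) (h : (p.digits k).sum = 0) : k = 0 := by
  induction k using Nat.strong_induction_on with
  | _ k ih =>
    rcases Nat.eq_zero_or_pos k with hk | hk
    · exact hk
    · rw [Nat.digits_def' (by omega : 1 < p) hk] at h
      simp only [List.sum_cons, Nat.add_eq_zero] at h
      have hd : k / p = 0 := ih (k / p) (Nat.div_lt_self hk (by omega)) h.2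
      have h5 := Nat.div_add_mod k p
      rw [hd, Nat.mul_zero] at h5
      omega

lemma eq_pow_of_sum_digits_eq_one {p : ℕ} (hp : 2 ≤ p) :
    ∀ k, (p.digits k).sum = 1 → ∃ b, k = p ^ b := by
  intro k
  induction k using Nat.strong_induction_on with
  | _ k ih =>
    intro h
    rcases Nat.eq_zero_or_pos k with hk | hk
    · simp [hk] at h
    · rw [Nat.digits_def' (by omega : 1 < p) hk] at h
      simp only [List.sum_cons] at h
      rcases Nat.eq_zero_or_pos (k % p) with hm | hm
      · have hd : (p.digits (k / p)).sum = 1 := by omega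
        obtain ⟨b, hb⟩ := ih (k / p) (Nat.div_lt_self hk (by omega)) hd
        have h5 := Nat.div_add_mod k p
        rw [hb, hm, Nat.add_zero] at h5
        exact ⟨b + 1, by rw [← h5, pow_succ, mul_comm]⟩
      · have hm1 : k % p = 1 ∧ (p.digits (k / p)).sum = 0 := by omega
        have hd : k / p = 0 := sum_digits_zero_iff hp hm1.2
        have h5 := Nat.div_add_mod k p
        rw [hd, Nat.mul_zero] at h5
        exact ⟨0, by rw [pow_zero]; omega⟩

lemma sum_digits_pow {p : ℕ} (hp : 2 ≤ p) (b : ℕ) : (p.digits (p ^ b)).sum = 1 := by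
  induction b with
  | zero =>
    rw [pow_zero, Nat.digits_def' (by omega : 1 < p) (by omega)]
    have h1 : 1 % p = 1 := Nat.mod_eq_of_lt (by omega)
    have h2 : 1 / p = 0 := Nat.div_eq_of_lt (by omega)
    rw [h1, h2]
    simp
  | succ b ih =>
    rw [Nat.digits_def' (by omega : 1 < p) (Nat.pow_pos (by omega))]
    rw [pow_succ', Nat.mul_mod_right, Nat.mul_div_cancel_left _ (by omega : 0 < p)]
    simpa using ih

lemma two_le_sum_digits {p k : ℕ} (hp : 2 ≤ p) (hk : k ≠ 0) (h : ∀ b, k ≠ p ^ b) :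
    2 ≤ (p.digits k).sum := by
  rcases Nat.lt_or_ge ((p.digits k).sum) 2 with hs | hs
  · interval_cases hs' : (p.digits k).sum
    · exact absurd (sum_digits_zero_iff hp hs') hk
    · obtain ⟨b, hb⟩ := eq_pow_of_sum_digits_eq_one hp k hs'
      exact absurd hb (h b)
  · exact hs


lemma norm_aux (p : ℕ) [hp : Fact p.Prime] {L : Type*} [NormedField L] [NormedAlgebra ℚ_[p] L]
    (hnorm : ∀ x : ℚ_[p], ‖algebraMap ℚ_[p] L x‖ = ‖x‖)
    (π : L) (hπ : π ^ (p - 1) = -(p : L))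
    (c : ℤ) (k m t : ℕ) (hc : (p:ℤ)^t ∣ c)
    (H : ((p:ℤ) - 1) * (padicValNat p (m !) : ℤ) + 2 ≤ (t:ℤ) * ((p:ℤ)-1) + k) :
    ‖(c : L) * π ^ k / ((m ! : ℕ) : L)‖ ≤ (p:ℝ) ^ (-(2 / ((p:ℝ) - 1))) := by
  have hp2 : 2 ≤ p := hp.out.two_le
  set q : ℝ := (p : ℝ) with hqdef
  have hq1 : 1 < q := by rw [hqdef]; exact_mod_cast hp.out.one_lt
  have hq0 : 0 < q := by linarith
  have hL : ∀ z : ℤ, ‖((z : ℤ) : L)‖ = ‖((z : ℤ) : ℚ_[p])‖ := by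
    intro z
    rw [← map_intCast (algebraMap ℚ_[p] L) z, hnorm]
  have hLn : ∀ n : ℕ, ‖((n : ℕ) : L)‖ = ‖((n : ℕ) : ℚ_[p])‖ := by
    intro n
    rw [← map_natCast (algebraMap ℚ_[p] L) n, hnorm]
  have hπn : ‖π‖ ^ (p - 1) = q⁻¹ := by
    rw [← norm_pow, hπ, norm_neg, hLn p, Padic.norm_p]
  set v : ℕ := padicValNat p (m !) with hvdef
  have hfac : ‖((m ! : ℕ) : L)‖ = q ^ (-(v : ℤ)) := by
    rw [hLn]
    have h1 : ((m ! : ℕ) : ℚ_[p]) = ((m ! : ℚ) : ℚ_[p]) := by push_cast; ring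
    rw [h1, Padic.eq_padicNorm,
      padicNorm.eq_zpow_of_nonzero (by exact_mod_cast (Nat.factorial_ne_zero m))]
    rw [padicValRat.of_nat, hqdef]
    push_cast
    norm_num
    rw [hvdef]
  have hfacpos : (0 : ℝ) < ‖((m ! : ℕ) : L)‖ := by
    rw [hfac]; positivity
  have hcL : ‖((c : ℤ) : L)‖ ≤ q ^ (-(t : ℤ)) := by
    obtain ⟨d, rfl⟩ := hc
    rw [hL, Int.cast_mul, norm_mul]
    have h2 : ‖(((p:ℤ)^t : ℤ) : ℚ_[p])‖ = q ^ (-(t:ℤ)) := by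
      push_cast
      rw [norm_pow, Padic.norm_p, zpow_neg, ← inv_zpow, zpow_natCast]
    calc ‖(((p:ℤ)^t : ℤ) : ℚ_[p])‖ * ‖((d : ℤ) : ℚ_[p])‖
        ≤ ‖(((p:ℤ)^t : ℤ) : ℚ_[p])‖ * 1 := by
          exact mul_le_mul_of_nonneg_left (Padic.norm_int_le_one d) (norm_nonneg _)
      _ = q ^ (-(t:ℤ)) := by rw [mul_one, h2]
  -- reduce to (p-1)-th powers
  have hpm1 : p - 1 ≠ 0 := by omega
  have hBnn : (0:ℝ) ≤ q ^ (-(2 / (q - 1))) := (Real.rpow_pos_of_pos hq0 _).le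
  apply le_of_pow_le_pow_left₀ hpm1 hBnn
  have hcast : ((p - 1 : ℕ) : ℝ) = q - 1 := by
    rw [hqdef]; push_cast [Nat.cast_sub (by omega : 1 ≤ p)]; ring
  have hcastZ : ((p - 1 : ℕ) : ℤ) = (p:ℤ) - 1 := by omega
  have hRHS : (q ^ (-(2 / (q - 1)))) ^ (p - 1) = q ^ (-2 : ℤ) := by
    rw [← Real.rpow_natCast (q ^ (-(2 / (q - 1)))) (p - 1), ← Real.rpow_mul hq0.le, hcast]
    have hne : q - 1 ≠ 0 := by linarith
    have : -(2 / (q - 1)) * (q - 1) = -2 := by field_simp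
    rw [this]
    rw [show (-2 : ℝ) = ((-2 : ℤ) : ℝ) by norm_num, Real.rpow_intCast]
  rw [hRHS]
  have e1 : ‖(c : L) * π ^ k / ((m ! : ℕ) : L)‖ ^ (p-1)
      = ‖(c:L)‖ ^ (p-1) * (q⁻¹) ^ k / q ^ ((-(v:ℤ)) * ((p-1 : ℕ) : ℤ)) := by
    rw [norm_div, norm_mul, norm_pow, div_pow, mul_pow, hfac]
    rw [← pow_mul ‖π‖ k (p-1), mul_comm k (p-1), pow_mul ‖π‖ (p-1) k, hπn,
      ← zpow_natCast (q ^ (-(v:ℤ))) (p-1), ← zpow_mul]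
  rw [e1]
  have hqinvk : (q⁻¹) ^ k = q ^ (-(k:ℤ)) := by
    rw [inv_pow, ← zpow_natCast q k, ← zpow_neg]
  calc ‖(c:L)‖ ^ (p-1) * (q⁻¹) ^ k / q ^ ((-(v:ℤ)) * ((p-1 : ℕ) : ℤ))
      ≤ (q ^ (-(t:ℤ))) ^ (p-1) * (q⁻¹) ^ k / q ^ ((-(v:ℤ)) * ((p-1 : ℕ) : ℤ)) := by
        have h4 : (0:ℝ) < q ^ ((-(v:ℤ)) * ((p-1 : ℕ) : ℤ)) := by positivity
        exact (div_le_div_iff_of_pos_right h4).mpr (mul_le_mul_of_nonneg_right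
          (pow_le_pow_left₀ (norm_nonneg _) hcL (p-1)) (by positivity))
    _ = q ^ ((-(t:ℤ)) * ((p-1:ℕ):ℤ) + (-(k:ℤ)) - (-(v:ℤ)) * ((p-1 : ℕ) : ℤ)) := by
        rw [hqinvk, ← zpow_natCast (q ^ (-(t:ℤ))) (p-1), ← zpow_mul,
          ← zpow_add₀ hq0.ne', ← zpow_sub₀ hq0.ne']
    _ ≤ q ^ (-2 : ℤ) := by
        apply zpow_le_zpow_right₀ hq1.le
        rw [hcastZ]
        linarith [H]

lemma coeff_sub_pow {L : Type*} [Field L] (p k r : ℕ) (π : L) :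
    PowerSeries.coeff (R := L) r ((PowerSeries.C (R := L) π * PowerSeries.X
        - PowerSeries.C (R := L) π * PowerSeries.X ^ p) ^ k)
      = ∑ m ∈ range (k+1),
        (if m + p*(k-m) = r then ((-1:L))^(m+k) * (k.choose m : L) * π ^ k else 0) := by
  have h0 : (PowerSeries.C (R := L) π * PowerSeries.X - PowerSeries.C (R := L) π * PowerSeries.X ^ p) ^ k
      = PowerSeries.C (R := L) (π ^ k) * (PowerSeries.X - PowerSeries.X ^ p) ^ k := by
    rw [← mul_sub, mul_pow, map_pow]
  rw [h0, PowerSeries.coeff_C_mul, sub_pow, map_sum, Finset.mul_sum]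
  apply Finset.sum_congr rfl
  intro m hm
  have h2 : ((-1 : L⟦X⟧)) ^ (m+k) * PowerSeries.X ^ m * (PowerSeries.X ^ p) ^ (k-m)
        * (↑(k.choose m) : L⟦X⟧)
      = PowerSeries.C (R := L) ((-1:L)^(m+k) * (k.choose m : L)) * PowerSeries.X ^ (m + p*(k-m)) := by
    rw [map_mul, map_pow, map_neg, map_one, map_natCast, ← pow_mul]
    ring
  rw [h2, PowerSeries.coeff_C_mul, PowerSeries.coeff_X_pow]
  rw [mul_ite, mul_one, mul_zero, mul_ite, mul_zero]
  simp only [eq_comm]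
  split_ifs with h
  · ring
  · rfl

lemma dworkLambda_eq {L : Type*} [Field L] (p : ℕ) (π : L) (r : ℕ) :
    dworkLambda p π r = ∑ k ∈ range (r+1), ∑ m ∈ range (k+1),
      (if m + p*(k-m) = r then ((-1:L))^(m+k) * (k.choose m : L) * π ^ k / (k ! : L) else 0) := by
  unfold dworkLambda
  apply Finset.sum_congr rfl
  intro k hk
  rw [coeff_sub_pow, Finset.sum_div]
  apply Finset.sum_congr rfl
  intro m hm
  split_ifs with h
  · rfl
  · exact zero_div _


lemma term_bound (p : ℕ) [hp : Fact p.Prime] {L : Type*} [NormedField L] [NormedAlgebra ℚ_[p] L]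
    (hnorm : ∀ x : ℚ_[p], ‖algebraMap ℚ_[p] L x‖ = ‖x‖)
    (π : L) (hπ : π ^ (p - 1) = -(p : L))
    (r k m : ℕ) (hmk : m ≤ k) (hcond : m + p*(k-m) = r) (hr : 2 ≤ r)
    (hne1 : ¬(m = k ∧ ∃ b, k = p ^ b)) (hne2 : ¬(m = 0 ∧ ∃ b, k = p ^ b)) :
    ‖((-1:L))^(m+k) * (k.choose m : L) * π ^ k / (k ! : L)‖
      ≤ (p:ℝ) ^ (-(2 / ((p:ℝ) - 1))) := by
  have hp2 : 2 ≤ p := hp.out.two_le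
  have hk0 : k ≠ 0 := by
    rintro rfl
    have hm0 : m = 0 := by omega
    subst hm0
    simp at hcond
    omega
  set s : ℕ := (p.digits k).sum with hs
  have hleg : (p - 1) * padicValNat p (k !) = k - s := sub_one_mul_padicValNat_factorial k
  have hsle : s ≤ k := Nat.digit_sum_le p k
  have hwZ : ((p:ℤ) - 1) * (padicValNat p (k !) : ℤ) = (k : ℤ) - (s : ℤ) := by
    have h := congrArg (Nat.cast : ℕ → ℤ) hleg
    rw [Nat.cast_mul, Nat.cast_sub (by omega : 1 ≤ p), Nat.cast_sub hsle, Nat.cast_one] at h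
    exact h
  have hEq : ∀ c : ℤ, (c : L) = ((-1:L))^(m+k) * (k.choose m : L) →
      ∀ t : ℕ, (p:ℤ)^t ∣ c →
      ((p:ℤ) - 1) * (padicValNat p (k !) : ℤ) + 2 ≤ (t:ℤ) * ((p:ℤ)-1) + k →
      ‖((-1:L))^(m+k) * (k.choose m : L) * π ^ k / (k ! : L)‖
        ≤ (p:ℝ) ^ (-(2 / ((p:ℝ) - 1))) := by
    intro c hc t hdvd hH
    rw [← hc]
    exact norm_aux p hnorm π hπ c k k t hdvd hH
  by_cases hkp : ∃ b, k = p ^ b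
  · obtain ⟨b, rfl⟩ := hkp
    have hm0 : m ≠ 0 := fun h => hne2 ⟨h, b, rfl⟩
    have hmk' : m ≠ p ^ b := fun h => hne1 ⟨h, b, rfl⟩
    have hdvd : (p : ℕ) ∣ (p^b).choose m := hp.out.dvd_choose_pow hm0 hmk'
    obtain ⟨d, hd⟩ := hdvd
    refine hEq (((-1:ℤ))^(m + p^b) * ((p^b).choose m : ℤ)) ?_ 1 ?_ ?_
    · push_cast; ring
    · rw [pow_one]
      refine Dvd.dvd.mul_left ?_ _
      exact ⟨d, by exact_mod_cast hd⟩
    · have hs1 : s = 1 := sum_digits_pow hp2 b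
      rw [hwZ, hs1]
      have : (2:ℤ) ≤ (p:ℤ) := by exact_mod_cast hp2
      push_cast
      linarith
  · have hs2 : 2 ≤ s := two_le_sum_digits hp2 hk0 (fun b hb => hkp ⟨b, hb⟩)
    refine hEq (((-1:ℤ))^(m + k) * ((k).choose m : ℤ)) ?_ 0 ?_ ?_
    · push_cast; ring
    · simpa using one_dvd _
    · rw [hwZ]
      have : (2:ℤ) ≤ (s:ℤ) := by exact_mod_cast hs2
      push_cast
      linarith


lemma dworkLambda01 (p : ℕ) [hp : Fact p.Prime] (L : Type*) [NormedField L]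
    [NormedAlgebra ℚ_[p] L]
    (hnorm : ∀ x : ℚ_[p], ‖algebraMap ℚ_[p] L x‖ = ‖x‖)
    (π : L) (hπ : π ^ (p - 1) = -(p : L)) :
    dworkLambda p π 0 = 1 ∧ dworkLambda p π 1 = π := by
  have hp2 : 2 ≤ p := hp.out.two_le
  constructor
  · rw [dworkLambda_eq]
    norm_num
  · rw [dworkLambda_eq]
    simp only [Finset.sum_range_succ, Finset.sum_range_zero, Nat.sub_zero, Nat.sub_self,
      Nat.mul_zero, Nat.mul_one, Nat.zero_add, Nat.add_zero, zero_add]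
    rw [if_neg (by omega : ¬(0:ℕ) = 1), if_neg (by omega : ¬p = 1)]
    simp


lemma dworkLambda_bound (p : ℕ) [hp : Fact p.Prime] (L : Type*) [NormedField L]
    [NormedAlgebra ℚ_[p] L]
    (hnorm : ∀ x : ℚ_[p], ‖algebraMap ℚ_[p] L x‖ = ‖x‖)
    (π : L) (hπ : π ^ (p - 1) = -(p : L)) :
      ∀ r : ℕ, 2 ≤ r →
        ‖dworkLambda p π r‖ ≤ (p : ℝ) ^ (-(2 / ((p : ℝ) - 1))) := by
  have hp2 : 2 ≤ p := hp.out.two_le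
  have hCZ : CharZero L := charZero_of_injective_algebraMap (algebraMap ℚ_[p] L).injective
  have hUD : IsUltrametricDist L :=
    IsUltrametricDist.isUltrametricDist_of_forall_norm_natCast_le_one (fun n => by
      rw [← map_natCast (algebraMap ℚ_[p] L), hnorm]
      exact_mod_cast Padic.norm_int_le_one (n : ℤ))
  intro r hr
  have hB0 : (0:ℝ) ≤ (p : ℝ) ^ (-(2 / ((p : ℝ) - 1))) :=
    (Real.rpow_pos_of_pos (by positivity) _).le
  rw [dworkLambda_eq, Finset.sum_sigma']
  by_cases hra : ∃ a, r = p ^ a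
  · obtain ⟨a, rfl⟩ := hra
    have ha1 : 1 ≤ a := by
      rcases Nat.eq_zero_or_pos a with h | h
      · subst h; simp at hr
      · exact h
    set n : ℕ := p ^ (a - 1) with hn
    have hpn : p * n = p ^ a := by
      rw [hn, ← _root_.pow_succ']
      congr 1
      omega
    have hn1 : 1 ≤ n := Nat.one_le_pow _ _ (by omega)
    have hnlt : n ≤ p ^ a := by
      calc n ≤ p * n := Nat.le_mul_of_pos_left _ (by omega)
        _ = p ^ a := hpn
    have hs12 : (⟨p ^ a, p ^ a⟩ : (_ : ℕ) × ℕ) ≠ ⟨n, 0⟩ := by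
      intro h
      obtain ⟨h1, h2⟩ := Sigma.mk.inj_iff.mp h
      exact pow_ne_zero a (by omega : p ≠ 0) (eq_of_heq h2)
    have hsub : ({⟨p ^ a, p ^ a⟩, ⟨n, 0⟩} : Finset ((_ : ℕ) × ℕ))
        ⊆ (range (p ^ a + 1)).sigma (fun k => range (k + 1)) := by
      intro x hx
      simp only [Finset.mem_insert, Finset.mem_singleton] at hx
      rcases hx with rfl | rfl <;> simp [Finset.mem_sigma, Finset.mem_range] <;> omega
    rw [← Finset.sum_sdiff hsub]
    refine le_trans (IsUltrametricDist.norm_add_le_max _ _) (max_le ?_ ?_)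
    · apply IsUltrametricDist.norm_sum_le_of_forall_le_of_nonneg hB0
      rintro ⟨k, m⟩ hmem
      rw [Finset.mem_sdiff] at hmem
      obtain ⟨hmemA, hmemP⟩ := hmem
      simp only [Finset.mem_sigma, Finset.mem_range] at hmemA
      simp only [Finset.mem_insert, Finset.mem_singleton] at hmemP
      push_neg at hmemP
      dsimp only
      split_ifs with hcond
      · apply term_bound p hnorm π hπ _ k m (by omega) hcond hr
        · rintro ⟨rfl, b, rfl⟩
          simp only [Nat.sub_self, Nat.mul_zero, Nat.add_zero] at hcond
          have hba : b = a := Nat.pow_right_injective hp2 hcond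
          exact hmemP.1 (by rw [hba])
        · rintro ⟨rfl, b, rfl⟩
          simp only [Nat.sub_zero, Nat.zero_add] at hcond
          have hbn : p ^ b = n := by
            have h3 : p * p ^ b = p * n := by rw [hcond, ← hpn]
            exact Nat.eq_of_mul_eq_mul_left (by omega) h3
          exact hmemP.2 (by rw [hbn])
      · simpa using hB0
    · rw [Finset.sum_pair hs12]
      dsimp only
      have hc1 : p ^ a + p * (p ^ a - p ^ a) = p ^ a := by simp
      have hc2 : 0 + p * (n - 0) = p ^ a := by simpa using hpn
      rw [if_pos hc1, if_pos hc2]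
      obtain ⟨m', hm', hmod⟩ := fact_p_mul p n
      rw [hpn] at hm'
      set c : ℤ := (-1) ^ n * ((p:ℤ) ^ n * (1 + (m' : ℤ))) with hc
      have hfacne : (((p ^ a)! : ℕ) : L) ≠ 0 := Nat.cast_ne_zero.mpr (Nat.factorial_ne_zero _)
      have hnfacne : ((n ! : ℕ) : L) ≠ 0 := Nat.cast_ne_zero.mpr (Nat.factorial_ne_zero _)
      have hπp : π ^ p = π * (-(p : L)) := by
        conv_lhs => rw [show p = (p - 1) + 1 by omega, _root_.pow_succ, hπ]
        ring
      have hπpa : π ^ (p ^ a) = π ^ n * ((-1 : L)) ^ n * (p : L) ^ n := by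
        rw [← hpn, pow_mul, hπp, mul_pow, neg_pow]
        ring
      have hfactL : (((p ^ a)! : ℕ) : L) = (p : L) ^ n * ((n ! : ℕ) : L) * (m' : L) := by
        exact_mod_cast congrArg (Nat.cast : ℕ → L) hm'
      have hval : (-1 : L) ^ (p ^ a + p ^ a) * (((p ^ a).choose (p ^ a) : ℕ) : L) * π ^ (p ^ a)
              / (((p ^ a)! : ℕ) : L)
            + (-1 : L) ^ (0 + n) * ((n.choose 0 : ℕ) : L) * π ^ n / ((n ! : ℕ) : L)
          = (c : L) * π ^ n / (((p ^ a)! : ℕ) : L) := by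
        have hev : (-1 : L) ^ (p ^ a + p ^ a) = 1 := Even.neg_one_pow ⟨p ^ a, rfl⟩
        have hpL : (p : L) ≠ 0 := Nat.cast_ne_zero.mpr (by omega)
        have hmL : (m' : L) ≠ 0 := by
          intro h0
          rw [h0, mul_zero] at hfactL
          exact hfacne hfactL
        have hFne : (p : L) ^ n * ((n ! : ℕ) : L) * (m' : L) ≠ 0 :=
          mul_ne_zero (mul_ne_zero (pow_ne_zero _ hpL) hnfacne) hmL
        rw [hev, hπpa, Nat.choose_self, Nat.choose_zero_right, hc]
        push_cast
        rw [hfactL]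
        rw [div_add_div _ _ hFne hnfacne, div_eq_div_iff (mul_ne_zero hFne hnfacne) hFne]
        ring
      rw [hval]
      have h1m : (p : ℤ) ∣ (1 + (m' : ℤ)) := by
        have hz : (((1 + (m' : ℤ)) : ℤ) : ZMod p) = 0 := by
          push_cast
          rw [hmod]
          rcases Nat.even_or_odd n with he | ho
          · have h2n : 2 ∣ n := he.two_dvd
            rw [hn] at h2n
            have h2p : 2 ∣ p := Nat.Prime.dvd_of_dvd_pow Nat.prime_two h2n
            have hp2' : p = 2 := ((Nat.prime_dvd_prime_iff_eq Nat.prime_two hp.out).mp h2p).symm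
            subst hp2'
            rw [he.neg_one_pow]
            rfl
          · rw [ho.neg_one_pow]
            ring
        exact_mod_cast (ZMod.intCast_zmod_eq_zero_iff_dvd _ p).mp hz
      obtain ⟨d, hd⟩ := h1m
      have hdvd : (p : ℤ) ^ (n + 1) ∣ c := by
        rw [hc, hd]
        exact ⟨(-1 : ℤ) ^ n * d, by ring⟩
      have hlegA : (p - 1) * padicValNat p ((p ^ a)!) = p ^ a - 1 := by
        rw [sub_one_mul_padicValNat_factorial, sum_digits_pow hp2]
      have hwZ : ((p : ℤ) - 1) * (padicValNat p ((p ^ a)!) : ℤ) = ((p ^ a : ℕ) : ℤ) - 1 := by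
        have h := congrArg (Nat.cast : ℕ → ℤ) hlegA
        rw [Nat.cast_mul, Nat.cast_sub (by omega : 1 ≤ p),
          Nat.cast_sub (Nat.one_le_pow _ _ (by omega)), Nat.cast_one] at h
        exact h
      have hH : ((p : ℤ) - 1) * (padicValNat p ((p ^ a)!) : ℤ) + 2
          ≤ ((n + 1 : ℕ) : ℤ) * ((p : ℤ) - 1) + (n : ℤ) := by
        have hpnZ : (p : ℤ) * (n : ℤ) = ((p ^ a : ℕ) : ℤ) := by exact_mod_cast hpn
        have hplin : ((n : ℤ) + 1) * ((p : ℤ) - 1) + (n : ℤ)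
            = (p : ℤ) * (n : ℤ) + (p : ℤ) - 1 := by ring
        have hpZ : (2 : ℤ) ≤ (p : ℤ) := by exact_mod_cast hp2
        push_cast at hwZ hpnZ ⊢
        linarith
      exact norm_aux p hnorm π hπ c n (p ^ a) (n + 1) hdvd hH
  · apply IsUltrametricDist.norm_sum_le_of_forall_le_of_nonneg hB0
    rintro ⟨k, m⟩ hmem
    simp only [Finset.mem_sigma, Finset.mem_range] at hmem
    dsimp only
    split_ifs with hcond
    · apply term_bound p hnorm π hπ r k m (by omega) hcond hr
      · rintro ⟨rfl, b, rfl⟩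
        simp only [Nat.sub_self, Nat.mul_zero, Nat.add_zero] at hcond
        exact hra ⟨b, hcond.symm⟩
      · rintro ⟨rfl, b, rfl⟩
        refine hra ⟨b + 1, ?_⟩
        rw [_root_.pow_succ']
        simp only [Nat.sub_zero, Nat.zero_add] at hcond
        omega
    · simpa using hB0

/-- `λ₀ = 1`, `λ₁ = π`, and `‖λ_r‖ ≤ p^{-2/(p-1)}` for all `r ≥ 2`;
i.e. `θ(z) ≡ 1 + πz` modulo terms of `π`-adic order at least `2/(p-1)` in degree `≥ 2`. -/
theorem statement3 (p : ℕ) [Fact p.Prime] (L : Type*) [NormedField L]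
    [NormedAlgebra ℚ_[p] L]
    (hnorm : ∀ x : ℚ_[p], ‖algebraMap ℚ_[p] L x‖ = ‖x‖)
    (π : L) (hπ : π ^ (p - 1) = -(p : L)) :
    dworkLambda p π 0 = 1 ∧ dworkLambda p π 1 = π ∧
      ∀ r : ℕ, 2 ≤ r →
        ‖dworkLambda p π r‖ ≤ (p : ℝ) ^ (-(2 / ((p : ℝ) - 1))) := by
  exact ⟨(dworkLambda01 p L hnorm π hπ).1, (dworkLambda01 p L hnorm π hπ).2,
    dworkLambda_bound p L hnorm π hπ⟩
end
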